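/- arXiv:2508.15925 — 9 statements merged into one kernel-verified Lean document; each statement's English description precedes it below -/
import Mathlib

section
/- Let r ≥ 2 be an integer, let a_1, …, a_{r−1} be positive integers, let β_1, …, β_{r−1} be distinct nonzero complex numbers, and let h ∈ ℂ[x] be a polynomial of degree strictly less than a_1 + ⋯ + a_{r−1}. Define the polynomial ℋ₃(x,y) = y·∏_{i=1}^{r−1}(β_i − x)^{a_i} + h(x) in ℂ[x,y]. Then for any polynomials ψ₁, ψ₂ ∈ ℂ[x,y] of total degrees n₁ ≥ 1 and n₂ ≥ 1, the total degree of the polynomial ψ₂·∏_{i=1}^{r−1}(β_i − ψ₁)^{a_i} + h(ψ₁) (i.e., of ℋ₃ composed with (ψ₁,ψ₂)) equals n₂ + n₁·(a_1 + ⋯ + a_{r−1}); in particular it is greater than or equal to the total degree of ℋ₃, which equals 1 + (a_1 + ⋯ + a_{r−1}). -/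
open MvPolynomial Polynomial

noncomputable def homogenize (σ R : Type*) [CommSemiring R] :
    MvPolynomial σ R →ₐ[R] Polynomial (MvPolynomial σ R) :=
  MvPolynomial.aeval (fun i => Polynomial.C (MvPolynomial.X i) * Polynomial.X)

lemma homogenize_monomial {σ R : Type*} [CommSemiring R] (d : σ →₀ ℕ) (c : R) :
    homogenize σ R (MvPolynomial.monomial d c) =
      Polynomial.C (MvPolynomial.monomial d c) * Polynomial.X ^ (Finsupp.degree d) := by
  classical
  simp only [_root_.homogenize, MvPolynomial.aeval_monomial, mul_pow]
  rw [Finsupp.prod, Finset.prod_mul_distrib, MvPolynomial.monomial_eq, Finsupp.prod]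
  simp only [← Polynomial.C_pow, ← map_prod, Finset.prod_pow_eq_pow_sum, Finsupp.degree]
  push_cast
  ring_nf
  simp [MvPolynomial.algebraMap_eq, mul_comm, mul_assoc, mul_left_comm]
  rfl

lemma coeff_homogenize {σ R : Type*} [CommSemiring R] (p : MvPolynomial σ R) (n : ℕ) :
    (homogenize σ R p).coeff n = MvPolynomial.homogeneousComponent n p := by
  classical
  induction p using MvPolynomial.induction_on' with
  | monomial d c =>
    rw [_root_.homogenize_monomial]
    ext m
    simp only [MvPolynomial.coeff_homogeneousComponent, Polynomial.coeff_C_mul,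
      Polynomial.coeff_X_pow, MvPolynomial.coeff_monomial]
    by_cases hd : m.degree = n <;> by_cases hm : d = m <;>
      split_ifs <;> simp_all [MvPolynomial.coeff_monomial]
  | add p q hp hq => simp [map_add, hp, hq]

lemma homog_ne_zero {σ R : Type*} [CommSemiring R] {p : MvPolynomial σ R} (hp : p ≠ 0) :
    MvPolynomial.homogeneousComponent p.totalDegree p ≠ 0 := by
  classical
  obtain ⟨d, hd, hdeg⟩ := Finset.exists_mem_eq_sup p.support
    (MvPolynomial.support_nonempty.mpr hp) (fun s => s.sum fun _ e => e)
  have hdd : Finsupp.degree d = p.totalDegree := by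
    rw [MvPolynomial.totalDegree, hdeg]; rfl
  intro hzero
  have := MvPolynomial.coeff_homogeneousComponent (φ := p) (n := p.totalDegree) d
  rw [hzero, if_pos hdd] at this
  exact (MvPolynomial.mem_support_iff.mp hd) this.symm

lemma natDegree_homogenize {σ R : Type*} [CommSemiring R] {p : MvPolynomial σ R} (hp : p ≠ 0) :
    (homogenize σ R p).natDegree = p.totalDegree := by
  apply le_antisymm
  · apply Polynomial.natDegree_le_iff_coeff_eq_zero.mpr
    intro n hn
    rw [_root_.coeff_homogenize]
    exact MvPolynomial.homogeneousComponent_eq_zero n p hn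
  · apply Polynomial.le_natDegree_of_ne_zero
    rw [_root_.coeff_homogenize]
    exact homog_ne_zero hp

lemma homogenize_ne_zero {σ R : Type*} [CommSemiring R] {p : MvPolynomial σ R} (hp : p ≠ 0) :
    homogenize σ R p ≠ 0 := by
  intro h
  apply homog_ne_zero hp
  rw [← _root_.coeff_homogenize, h, Polynomial.coeff_zero]

lemma totalDegree_mul_eq {σ R : Type*} [CommRing R] [IsDomain R]
    {p q : MvPolynomial σ R} (hp : p ≠ 0) (hq : q ≠ 0) :
    (p * q).totalDegree = p.totalDegree + q.totalDegree := by
  rw [← natDegree_homogenize (mul_ne_zero hp hq), ← natDegree_homogenize hp,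
    ← natDegree_homogenize hq, map_mul,
    Polynomial.natDegree_mul (homogenize_ne_zero hp) (homogenize_ne_zero hq)]

lemma totalDegree_prod_pow {σ R ι : Type*} [CommRing R] [IsDomain R] [Fintype ι]
    {f : ι → MvPolynomial σ R} (hf : ∀ i, f i ≠ 0) (a : ι → ℕ) :
    (∏ i, f i ^ a i).totalDegree = ∑ i, a i * (f i).totalDegree := by
  have hne : ∀ i, homogenize σ R (f i) ≠ 0 := fun i => homogenize_ne_zero (hf i)
  have hprodne : (∏ i, f i ^ a i) ≠ 0 := by
    apply Finset.prod_ne_zero_iff.mpr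
    intro i _
    exact pow_ne_zero _ (hf i)
  rw [← natDegree_homogenize hprodne, map_prod]
  simp only [map_pow]
  rw [Polynomial.natDegree_prod _ _ (fun i _ => pow_ne_zero _ (hne i))]
  congr 1; ext i
  rw [Polynomial.natDegree_pow, natDegree_homogenize (hf i)]

lemma key_deg {k : ℕ} (hk : 0 < k) (a : Fin k → ℕ) (ha : ∀ i, 1 ≤ a i) (β : Fin k → ℂ)
    (h : Polynomial ℂ) (hh : h.degree < ((∑ i, a i : ℕ) : WithBot ℕ))
    (ψ₁ ψ₂ : MvPolynomial (Fin 2) ℂ) (n₁ n₂ : ℕ) (hn₁ : 1 ≤ n₁) (hn₂ : 1 ≤ n₂)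
    (hψ₁ : ψ₁.totalDegree = n₁) (hψ₂ : ψ₂.totalDegree = n₂) :
    (ψ₂ * (∏ i, (MvPolynomial.C (β i) - ψ₁) ^ a i) +
        Polynomial.aeval ψ₁ h).totalDegree = n₂ + n₁ * ∑ i, a i := by
  classical
  set S := ∑ i, a i with hS
  have hS1 : 1 ≤ S := le_trans (ha ⟨0, hk⟩)
    (Finset.single_le_sum (f := a) (fun i _ => Nat.zero_le _) (Finset.mem_univ _))
  have hq : ∀ i : Fin k, (MvPolynomial.C (β i) - ψ₁).totalDegree = n₁ := by
    intro i
    rw [sub_eq_add_neg, MvPolynomial.totalDegree_add_eq_right_of_totalDegree_lt,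
      MvPolynomial.totalDegree_neg, hψ₁]
    rw [MvPolynomial.totalDegree_neg, hψ₁]
    exact lt_of_le_of_lt (MvPolynomial.totalDegree_C _).le hn₁
  have hqne : ∀ i : Fin k, (MvPolynomial.C (β i) - ψ₁) ≠ 0 := by
    intro i h0
    have := hq i
    rw [h0, MvPolynomial.totalDegree_zero] at this
    omega
  have hψ₂ne : ψ₂ ≠ 0 := by
    intro h0; rw [h0, MvPolynomial.totalDegree_zero] at hψ₂; omega
  have hP : (∏ i, (MvPolynomial.C (β i) - ψ₁) ^ a i).totalDegree = S * n₁ := by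
    rw [totalDegree_prod_pow hqne a]
    simp only [hq]
    rw [← Finset.sum_mul]
  have hPne : (∏ i, (MvPolynomial.C (β i) - ψ₁) ^ a i) ≠ 0 :=
    Finset.prod_ne_zero_iff.mpr fun i _ => pow_ne_zero _ (hqne i)
  have hM : (ψ₂ * ∏ i, (MvPolynomial.C (β i) - ψ₁) ^ a i).totalDegree = n₂ + n₁ * S := by
    rw [totalDegree_mul_eq hψ₂ne hPne, hψ₂, hP, mul_comm]
  have haev : (Polynomial.aeval ψ₁ h : MvPolynomial (Fin 2) ℂ).totalDegree
      ≤ h.natDegree * n₁ := by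
    rw [Polynomial.aeval_eq_sum_range]
    refine le_trans (MvPolynomial.totalDegree_finset_sum _ _) ?_
    apply Finset.sup_le
    intro i hi
    refine le_trans (MvPolynomial.totalDegree_smul_le _ _) ?_
    refine le_trans (MvPolynomial.totalDegree_pow _ _) ?_
    rw [hψ₁]
    exact Nat.mul_le_mul_right _ (Nat.lt_succ_iff.mp (Finset.mem_range.mp hi))
  have hlt : (Polynomial.aeval ψ₁ h : MvPolynomial (Fin 2) ℂ).totalDegree < n₂ + n₁ * S := by
    by_cases h0 : h = 0
    · rw [h0]
      simp only [map_zero, MvPolynomial.totalDegree_zero]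
      have : 1 ≤ n₁ * S := Nat.one_le_iff_ne_zero.mpr (by positivity)
      omega
    · have hnd : h.natDegree < S := (Polynomial.natDegree_lt_iff_degree_lt h0).mpr hh
      refine lt_of_le_of_lt haev ?_
      calc h.natDegree * n₁ < S * n₁ := (Nat.mul_lt_mul_right (by omega)).mpr hnd
        _ = n₁ * S := mul_comm _ _
        _ ≤ n₂ + n₁ * S := by omega
  rw [MvPolynomial.totalDegree_add_eq_left_of_totalDegree_lt (by rw [hM]; exact hlt), hM]

/-- Neumann–Norbury family 𝔉₃: degree of `ℋ₃ ∘ (ψ₁, ψ₂)`. -/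
theorem stmt0 (r : ℕ) (hr : 2 ≤ r)
    (a : Fin (r - 1) → ℕ) (ha : ∀ i, 1 ≤ a i)
    (β : Fin (r - 1) → ℂ) (hβ0 : ∀ i, β i ≠ 0) (hβinj : Function.Injective β)
    (h : Polynomial ℂ) (hh : h.degree < ((∑ i, a i : ℕ) : WithBot ℕ))
    (H3 : MvPolynomial (Fin 2) ℂ)
    (hH3 : H3 = MvPolynomial.X 1 *
        (∏ i, (MvPolynomial.C (β i) - MvPolynomial.X 0) ^ a i) +
        Polynomial.aeval (MvPolynomial.X 0) h)
    (ψ₁ ψ₂ : MvPolynomial (Fin 2) ℂ) (n₁ n₂ : ℕ)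
    (hn₁ : 1 ≤ n₁) (hn₂ : 1 ≤ n₂)
    (hψ₁ : ψ₁.totalDegree = n₁) (hψ₂ : ψ₂.totalDegree = n₂) :
    (ψ₂ * (∏ i, (MvPolynomial.C (β i) - ψ₁) ^ a i) +
        Polynomial.aeval ψ₁ h).totalDegree = n₂ + n₁ * ∑ i, a i ∧
    H3.totalDegree = 1 + ∑ i, a i ∧
    H3.totalDegree ≤
      (ψ₂ * (∏ i, (MvPolynomial.C (β i) - ψ₁) ^ a i) +
        Polynomial.aeval ψ₁ h).totalDegree := by
  have hk : 0 < r - 1 := by omega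
  have h1 := key_deg hk a ha β h hh ψ₁ ψ₂ n₁ n₂ hn₁ hn₂ hψ₁ hψ₂
  have h2 := key_deg hk a ha β h hh (MvPolynomial.X 0) (MvPolynomial.X 1) 1 1 le_rfl le_rfl
    (MvPolynomial.totalDegree_X 0) (MvPolynomial.totalDegree_X 1)
  rw [← hH3, one_mul] at h2
  have hS1 : 1 ≤ ∑ i, a i := le_trans (ha ⟨0, hk⟩)
    (Finset.single_le_sum (f := a) (fun i _ => Nat.zero_le _) (Finset.mem_univ _))
  refine ⟨h1, h2, ?_⟩
  rw [h1, h2]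
  have : ∑ i, a i ≤ n₁ * ∑ i, a i := Nat.le_mul_of_pos_left _ (by omega)
  omega
end

section
/- Let r ≥ 2 and k ≥ 1 be integers, let a_1, …, a_{r−1} be positive integers, let β_1, …, β_{r−1} be distinct nonzero complex numbers, let p, q, p₁, q₁ be integers with 0 ≤ p₁ < p, 0 ≤ q₁ < q and p·q₁ − q·p₁ = ±1, and let P ∈ ℂ[x] be a polynomial of degree at most k − 1. Set 𝒮(x,y) = x^k·y + P(x), 𝒢(x,y) = x^{q₁}·𝒮(x,y)^q, and ℋ₁(x,y) = 𝒢(x,y) + x^{p₁}·𝒮(x,y)^p·∏_{i=1}^{r−1}(β_i − 𝒢(x,y))^{a_i} in ℂ[x,y]. Then for any polynomials ψ₁, ψ₂ ∈ ℂ[x,y] of total degrees n₁ ≥ 1 and n₂ ≥ 1, the total degree of ℋ₁ composed with (ψ₁,ψ₂) equals p₁n₁ + p(kn₁ + n₂) + (q₁n₁ + q(kn₁ + n₂))·(a_1 + ⋯ + a_{r−1}); in particular it is greater than or equal to the total degree of ℋ₁, which equals p₁ + p(k+1) + (q₁ + q(k+1))·(a_1 + ⋯ + a_{r−1}). -/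
open MvPolynomial Polynomial

noncomputable def Phi : MvPolynomial (Fin 2) ℂ →ₐ[ℂ] Polynomial (MvPolynomial (Fin 2) ℂ) :=
  MvPolynomial.aeval fun i => Polynomial.C (MvPolynomial.X i) * Polynomial.X

lemma Phi_monomial (d : Fin 2 →₀ ℕ) (c : ℂ) :
    Phi (MvPolynomial.monomial d c) =
      Polynomial.C (MvPolynomial.monomial d c) * Polynomial.X ^ d.degree := by
  rw [Phi, MvPolynomial.aeval_monomial]
  have : (d.prod fun i k => (Polynomial.C (MvPolynomial.X i : MvPolynomial (Fin 2) ℂ) * Polynomial.X) ^ k)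
      = Polynomial.C (d.prod fun i k => (MvPolynomial.X i : MvPolynomial (Fin 2) ℂ) ^ k) *
        Polynomial.X ^ d.degree := by
    rw [Finsupp.prod, Finsupp.prod, Finsupp.degree]
    simp only [mul_pow, ← Polynomial.C_pow]
    rw [Finset.prod_mul_distrib, map_prod, Finset.prod_pow_eq_pow_sum]
    rfl
  rw [this, MvPolynomial.monomial_eq, Polynomial.algebraMap_apply, map_mul]
  rw [MvPolynomial.algebraMap_eq, mul_assoc]

lemma Phi_coeff (f : MvPolynomial (Fin 2) ℂ) (n : ℕ) :
    (Phi f).coeff n = MvPolynomial.homogeneousComponent n f := by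
  rw [MvPolynomial.homogeneousComponent_apply]
  conv_lhs => rw [f.as_sum]
  rw [map_sum, Polynomial.finset_sum_coeff, Finset.sum_filter]
  refine Finset.sum_congr rfl fun d _ => ?_
  rw [Phi_monomial, Polynomial.coeff_C_mul, Polynomial.coeff_X_pow]
  by_cases h : d.degree = n <;> simp [h, Ne.symm]

lemma homogeneousComponent_totalDegree_ne_zero {f : MvPolynomial (Fin 2) ℂ} (hf : f ≠ 0) :
    MvPolynomial.homogeneousComponent f.totalDegree f ≠ 0 := by
  have hsupp : f.support.Nonempty := MvPolynomial.support_nonempty.mpr hf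
  obtain ⟨d, hd, hdeg⟩ := Finset.exists_mem_eq_sup _ hsupp Finsupp.degree
  have hdeg' : d.degree = f.totalDegree := hdeg.symm
  intro h
  have := MvPolynomial.coeff_homogeneousComponent (n := f.totalDegree) (φ := f) d
  rw [h, hdeg'] at this
  simp at this
  exact (MvPolynomial.mem_support_iff.mp hd) this.symm

lemma Phi_natDegree {f : MvPolynomial (Fin 2) ℂ} (hf : f ≠ 0) :
    (Phi f).natDegree = f.totalDegree := by
  apply le_antisymm
  · apply Polynomial.natDegree_le_iff_coeff_eq_zero.mpr
    intro n hn
    rw [Phi_coeff]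
    exact MvPolynomial.homogeneousComponent_eq_zero _ f hn
  · apply Polynomial.le_natDegree_of_ne_zero
    rw [Phi_coeff]
    exact homogeneousComponent_totalDegree_ne_zero hf

lemma Phi_ne_zero {f : MvPolynomial (Fin 2) ℂ} (hf : f ≠ 0) : Phi f ≠ 0 := by
  intro h
  have h2 := Phi_coeff f f.totalDegree
  rw [h] at h2
  simp only [Polynomial.coeff_zero] at h2
  exact homogeneousComponent_totalDegree_ne_zero hf h2.symm

lemma tdeg_mul {f g : MvPolynomial (Fin 2) ℂ} (hf : f ≠ 0) (hg : g ≠ 0) :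
    (f * g).totalDegree = f.totalDegree + g.totalDegree := by
  rw [← Phi_natDegree (mul_ne_zero hf hg), ← Phi_natDegree hf, ← Phi_natDegree hg, map_mul]
  exact Polynomial.natDegree_mul (Phi_ne_zero hf) (Phi_ne_zero hg)

lemma tdeg_pow {f : MvPolynomial (Fin 2) ℂ} (hf : f ≠ 0) (n : ℕ) :
    (f ^ n).totalDegree = n * f.totalDegree := by
  induction n with
  | zero => simp
  | succ m ih =>
    rw [pow_succ, tdeg_mul (pow_ne_zero m hf) hf, ih]; ring

lemma tdeg_prod {ι : Type*} (s : Finset ι) (f : ι → MvPolynomial (Fin 2) ℂ)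
    (hf : ∀ i ∈ s, f i ≠ 0) :
    (∏ i ∈ s, f i).totalDegree = ∑ i ∈ s, (f i).totalDegree := by
  classical
  induction s using Finset.induction with
  | empty => simp
  | @insert j t hni ih =>
    rw [Finset.prod_insert hni, Finset.sum_insert hni,
      tdeg_mul (hf j (Finset.mem_insert_self j t))
        (Finset.prod_ne_zero_iff.mpr fun i hi => hf i (Finset.mem_insert_of_mem hi)),
      ih fun i hi => hf i (Finset.mem_insert_of_mem hi)]

lemma tdeg_ne_zero {f : MvPolynomial (Fin 2) ℂ} (hf : 0 < f.totalDegree) : f ≠ 0 := by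
  intro h; rw [h] at hf; simp at hf

set_option maxHeartbeats 1000000 in
lemma main_deg {m : ℕ} (a : Fin m → ℕ) (β : Fin m → ℂ)
    (k p q p₁ q₁ n₁ n₂ : ℕ) (hp : p₁ < p) (hq : q₁ < q) (hk : 1 ≤ k)
    (hn₁ : 1 ≤ n₁) (hn₂ : 1 ≤ n₂) (hsa : 1 ≤ ∑ i, a i)
    (P : Polynomial ℂ) (hP : P.degree < (k : WithBot ℕ))
    (ψ₁ ψ₂ : MvPolynomial (Fin 2) ℂ)
    (hψ₁ : ψ₁.totalDegree = n₁) (hψ₂ : ψ₂.totalDegree = n₂) :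
    (ψ₁ ^ q₁ * (ψ₁ ^ k * ψ₂ + Polynomial.aeval ψ₁ P) ^ q +
      ψ₁ ^ p₁ * (ψ₁ ^ k * ψ₂ + Polynomial.aeval ψ₁ P) ^ p *
        ∏ i, (MvPolynomial.C (β i) -
          ψ₁ ^ q₁ * (ψ₁ ^ k * ψ₂ + Polynomial.aeval ψ₁ P) ^ q) ^ a i).totalDegree
      = p₁ * n₁ + p * (k * n₁ + n₂) + (q₁ * n₁ + q * (k * n₁ + n₂)) * ∑ i, a i := by
  have hψ₁0 : ψ₁ ≠ 0 := tdeg_ne_zero (by omega)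
  have hψ₂0 : ψ₂ ≠ 0 := tdeg_ne_zero (by omega)
  set T := ψ₁ ^ k * ψ₂ + Polynomial.aeval ψ₁ P with hT
  -- degree of the aeval part is small
  have hPdeg : P.natDegree < k := by
    by_cases h0 : P = 0
    · simpa [h0] using (show 0 < k by omega)
    · exact (Polynomial.natDegree_lt_iff_degree_lt h0).mpr (by exact_mod_cast hP)
  have haev : (Polynomial.aeval ψ₁ P).totalDegree < k * n₁ + n₂ := by
    have h1 : (Polynomial.aeval ψ₁ P).totalDegree ≤ P.natDegree * n₁ := by
      rw [Polynomial.aeval_eq_sum_range]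
      refine (MvPolynomial.totalDegree_finset_sum _ _).trans ?_
      apply Finset.sup_le
      intro i hi
      refine (MvPolynomial.totalDegree_smul_le _ _).trans ?_
      refine (MvPolynomial.totalDegree_pow _ _).trans ?_
      rw [hψ₁]
      exact Nat.mul_le_mul_right n₁ (Nat.lt_succ_iff.mp (Finset.mem_range.mp hi))
    have h2 : (P.natDegree + 1) * n₁ ≤ k * n₁ := Nat.mul_le_mul_right n₁ hPdeg
    rw [add_mul, one_mul] at h2
    linarith
  have hXk : (ψ₁ ^ k * ψ₂).totalDegree = k * n₁ + n₂ := by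
    rw [tdeg_mul (pow_ne_zero k hψ₁0) hψ₂0, tdeg_pow hψ₁0, hψ₁, hψ₂]
  have hTdeg : T.totalDegree = k * n₁ + n₂ := by
    rw [hT, MvPolynomial.totalDegree_add_eq_left_of_totalDegree_lt (by rw [hXk]; exact haev), hXk]
  have hT0 : T ≠ 0 := tdeg_ne_zero (by omega)
  set G := ψ₁ ^ q₁ * T ^ q with hG
  have hG0 : G ≠ 0 := mul_ne_zero (pow_ne_zero _ hψ₁0) (pow_ne_zero _ hT0)
  have hGdeg : G.totalDegree = q₁ * n₁ + q * (k * n₁ + n₂) := by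
    rw [hG, tdeg_mul (pow_ne_zero _ hψ₁0) (pow_ne_zero _ hT0), tdeg_pow hψ₁0, tdeg_pow hT0,
      hψ₁, hTdeg]
  have hGpos : 0 < G.totalDegree := by
    rw [hGdeg]
    have hM1 : 1 ≤ k * n₁ + n₂ := le_trans hn₂ (Nat.le_add_left _ _)
    have h2 : k * n₁ + n₂ ≤ q * (k * n₁ + n₂) := Nat.le_mul_of_pos_left _ (by omega)
    nlinarith [Nat.zero_le (q₁ * n₁)]
  have hFdeg : ∀ i : Fin m, (MvPolynomial.C (β i) - G).totalDegree = G.totalDegree := by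
    intro i
    rw [sub_eq_add_neg, MvPolynomial.totalDegree_add_eq_right_of_totalDegree_lt
      (by rw [MvPolynomial.totalDegree_neg, MvPolynomial.totalDegree_C]; exact hGpos),
      MvPolynomial.totalDegree_neg]
  have hF0 : ∀ i : Fin m, MvPolynomial.C (β i) - G ≠ 0 := fun i =>
    tdeg_ne_zero (by rw [hFdeg i]; exact hGpos)
  have hProd : (∏ i, (MvPolynomial.C (β i) - G) ^ a i).totalDegree
      = G.totalDegree * ∑ i, a i := by
    rw [tdeg_prod _ _ fun i _ => pow_ne_zero _ (hF0 i)]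
    rw [Finset.mul_sum]
    exact Finset.sum_congr rfl fun i _ => by rw [tdeg_pow (hF0 i), hFdeg i, mul_comm]
  have hProd0 : (∏ i, (MvPolynomial.C (β i) - G) ^ a i) ≠ 0 :=
    Finset.prod_ne_zero_iff.mpr fun i _ => pow_ne_zero _ (hF0 i)
  have hSecond : (ψ₁ ^ p₁ * T ^ p * ∏ i, (MvPolynomial.C (β i) - G) ^ a i).totalDegree
      = p₁ * n₁ + p * (k * n₁ + n₂) + (q₁ * n₁ + q * (k * n₁ + n₂)) * ∑ i, a i := by
    rw [tdeg_mul (mul_ne_zero (pow_ne_zero _ hψ₁0) (pow_ne_zero _ hT0)) hProd0,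
      tdeg_mul (pow_ne_zero _ hψ₁0) (pow_ne_zero _ hT0), tdeg_pow hψ₁0, tdeg_pow hT0,
      hProd, hψ₁, hTdeg, hGdeg]
  rw [MvPolynomial.totalDegree_add_eq_right_of_totalDegree_lt, hSecond]
  rw [hSecond, hGdeg]
  have hA : (q₁ * n₁ + q * (k * n₁ + n₂)) ≤ (q₁ * n₁ + q * (k * n₁ + n₂)) * ∑ i, a i :=
    Nat.le_mul_of_pos_right _ (by omega)
  have hpM : k * n₁ + n₂ ≤ p * (k * n₁ + n₂) := Nat.le_mul_of_pos_left _ (by omega)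
  have hM1 : 1 ≤ k * n₁ + n₂ := le_trans hn₂ (Nat.le_add_left _ _)
  nlinarith [Nat.zero_le (q₁ * n₁), Nat.zero_le (p₁ * n₁)]

/-- Neumann–Norbury family 𝔉₁: degree of `ℋ₁ ∘ (ψ₁, ψ₂)`. -/
theorem stmt2 (r k : ℕ) (hr : 2 ≤ r) (hk : 1 ≤ k)
    (a : Fin (r - 1) → ℕ) (ha : ∀ i, 1 ≤ a i)
    (β : Fin (r - 1) → ℂ) (hβ0 : ∀ i, β i ≠ 0) (hβinj : Function.Injective β)
    (p q p₁ q₁ : ℕ) (hp : p₁ < p) (hq : q₁ < q)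
    (hpq : (p * q₁ : ℤ) - q * p₁ = 1 ∨ (p * q₁ : ℤ) - q * p₁ = -1)
    (P : Polynomial ℂ) (hP : P.degree < (k : WithBot ℕ))
    (S G H1 : MvPolynomial (Fin 2) ℂ)
    (hS : S = MvPolynomial.X 0 ^ k * MvPolynomial.X 1 +
        Polynomial.aeval (MvPolynomial.X 0) P)
    (hG : G = MvPolynomial.X 0 ^ q₁ * S ^ q)
    (hH1 : H1 = G + MvPolynomial.X 0 ^ p₁ * S ^ p *
        ∏ i, (MvPolynomial.C (β i) - G) ^ a i)
    (ψ₁ ψ₂ : MvPolynomial (Fin 2) ℂ) (n₁ n₂ : ℕ)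
    (hn₁ : 1 ≤ n₁) (hn₂ : 1 ≤ n₂)
    (hψ₁ : ψ₁.totalDegree = n₁) (hψ₂ : ψ₂.totalDegree = n₂) :
    (ψ₁ ^ q₁ * (ψ₁ ^ k * ψ₂ + Polynomial.aeval ψ₁ P) ^ q +
      ψ₁ ^ p₁ * (ψ₁ ^ k * ψ₂ + Polynomial.aeval ψ₁ P) ^ p *
        ∏ i, (MvPolynomial.C (β i) -
          ψ₁ ^ q₁ * (ψ₁ ^ k * ψ₂ + Polynomial.aeval ψ₁ P) ^ q) ^ a i).totalDegree
      = p₁ * n₁ + p * (k * n₁ + n₂) + (q₁ * n₁ + q * (k * n₁ + n₂)) * ∑ i, a i ∧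
    H1.totalDegree = p₁ + p * (k + 1) + (q₁ + q * (k + 1)) * ∑ i, a i ∧
    H1.totalDegree ≤
      (ψ₁ ^ q₁ * (ψ₁ ^ k * ψ₂ + Polynomial.aeval ψ₁ P) ^ q +
        ψ₁ ^ p₁ * (ψ₁ ^ k * ψ₂ + Polynomial.aeval ψ₁ P) ^ p *
          ∏ i, (MvPolynomial.C (β i) -
            ψ₁ ^ q₁ * (ψ₁ ^ k * ψ₂ + Polynomial.aeval ψ₁ P) ^ q) ^ a i).totalDegree := by
  subst hS hG hH1
  have hsa : 1 ≤ ∑ i, a i := by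
    have h0 : (0 : ℕ) < r - 1 := by omega
    calc 1 ≤ a ⟨0, h0⟩ := ha _
    _ ≤ ∑ i, a i := Finset.single_le_sum (fun i _ => Nat.zero_le _) (Finset.mem_univ _)
  have h1 := main_deg a β k p q p₁ q₁ n₁ n₂ hp hq hk hn₁ hn₂ hsa P hP ψ₁ ψ₂ hψ₁ hψ₂
  have h2 := main_deg a β k p q p₁ q₁ 1 1 hp hq hk le_rfl le_rfl hsa P hP
    (MvPolynomial.X 0) (MvPolynomial.X 1)
    (MvPolynomial.totalDegree_X 0) (MvPolynomial.totalDegree_X 1)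
  simp only [mul_one] at h2
  have e1 : k + 1 ≤ k * n₁ + n₂ := add_le_add (Nat.le_mul_of_pos_right k (by omega)) hn₂
  have e2 : p₁ ≤ p₁ * n₁ := Nat.le_mul_of_pos_right _ (by omega)
  have e3 : q₁ ≤ q₁ * n₁ := Nat.le_mul_of_pos_right _ (by omega)
  refine ⟨h1, h2, ?_⟩
  rw [h1, h2]
  exact add_le_add (add_le_add e2 (Nat.mul_le_mul_left p e1))
    (Nat.mul_le_mul_right _ (add_le_add e3 (Nat.mul_le_mul_left q e1)))
end

section
/- Let r ≥ 1 and k ≥ 1 be integers, let a_1, …, a_{r−1} be positive integers, let β_1, …, β_{r−1} be distinct nonzero complex numbers, let p, q, p₁, q₁ be integers with 0 ≤ p₁ < p, 0 ≤ q₁ < q and p·q₁ − q·p₁ = 1, and let P ∈ ℂ[x] have degree at most k − 1. Set 𝒮(x,y) = x^k·y + P(x), 𝒢(x,y) = x^{q₁}·𝒮(x,y)^q, ℋ₂(x,y) = x^{p₁}·𝒮(x,y)^p·∏_{i=1}^{r−1}(β_i − 𝒢(x,y))^{a_i}, and Π(t) = ∏_{i=1}^{r−1}(β_i − t)^{a_i}.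 For (t,𝔠) ∈ ℂ² with 𝔠·t·Π(t) ≠ 0 define x(t,𝔠) = t^p·Π(t)^q / 𝔠^q and y(t,𝔠) = 𝔠^{qk}·(𝔠^{q₁} − t^{p₁}·Π(t)^{q₁}·P(x(t,𝔠))) / (t^{pk+p₁}·Π(t)^{qk+q₁}). Then 𝒢(x(t,𝔠), y(t,𝔠)) = t and ℋ₂(x(t,𝔠), y(t,𝔠)) = 𝔠 for all such (t,𝔠). -/
/-- Explicit inverse of the rectifying map `ℛ = (𝒢, ℋ₂)` for family 𝔉₂
(case `p·q₁ − q·p₁ = 1`): `𝒢(x(t,𝔠), y(t,𝔠)) = t` and `ℋ₂(x(t,𝔠), y(t,𝔠)) = 𝔠`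
whenever `𝔠·t·Π(t) ≠ 0`. -/
theorem stmt7 (r k : ℕ) (hr : 1 ≤ r) (hk : 1 ≤ k)
    (a : Fin (r - 1) → ℕ) (ha : ∀ i, 1 ≤ a i)
    (β : Fin (r - 1) → ℂ) (hβ0 : ∀ i, β i ≠ 0) (hβinj : Function.Injective β)
    (p q p₁ q₁ : ℕ) (hp : p₁ < p) (hq : q₁ < q)
    (hpq : (p * q₁ : ℤ) - q * p₁ = 1)
    (P : Polynomial ℂ) (hP : P.degree < (k : WithBot ℕ))
    (S G H2 : ℂ → ℂ → ℂ)
    (hS : ∀ x y, S x y = x ^ k * y + P.eval x)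
    (hG : ∀ x y, G x y = x ^ q₁ * (S x y) ^ q)
    (hH2 : ∀ x y, H2 x y = x ^ p₁ * (S x y) ^ p * ∏ i, (β i - G x y) ^ a i)
    (Pr : ℂ → ℂ) (hPr : ∀ t, Pr t = ∏ i, (β i - t) ^ a i)
    (xx yy : ℂ → ℂ → ℂ)
    (hxx : ∀ t 𝔠, xx t 𝔠 = t ^ p * (Pr t) ^ q / 𝔠 ^ q)
    (hyy : ∀ t 𝔠, yy t 𝔠 = 𝔠 ^ (q * k) *
        (𝔠 ^ q₁ - t ^ p₁ * (Pr t) ^ q₁ * P.eval (xx t 𝔠)) /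
        (t ^ (p * k + p₁) * (Pr t) ^ (q * k + q₁))) :
    ∀ t 𝔠 : ℂ, 𝔠 * t * Pr t ≠ 0 →
      G (xx t 𝔠) (yy t 𝔠) = t ∧ H2 (xx t 𝔠) (yy t 𝔠) = 𝔠 := by
  intro t 𝔠 h
  have hc : 𝔠 ≠ 0 := fun h0 => h (by simp [h0])
  have ht : t ≠ 0 := fun h0 => h (by simp [h0])
  have hPrt : Pr t ≠ 0 := fun h0 => h (by simp [h0])
  have hpq' : p * q₁ = q * p₁ + 1 := by
    have : (p * q₁ : ℤ) = q * p₁ + 1 := by linarith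
    exact_mod_cast this
  have hSval : S (xx t 𝔠) (yy t 𝔠) = 𝔠 ^ q₁ / (t ^ p₁ * Pr t ^ q₁) := by
    rw [hS, hyy, hxx]
    field_simp
    rw [div_pow, ← pow_mul, div_mul_cancel₀ _ (pow_ne_zero _ hc)]
    ring
  have hGt : G (xx t 𝔠) (yy t 𝔠) = t := by
    rw [hG, hSval, hxx]
    field_simp
    rw [div_pow, div_pow, div_mul_div_comm, div_eq_iff (by simp [hc, ht, hPrt])]
    simp only [mul_pow, ← pow_mul]
    rw [hpq']
    ring
  refine ⟨hGt, ?_⟩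
  rw [hH2, hGt, hSval, hxx, ← hPr]
  field_simp
  rw [div_pow, div_pow, div_mul_div_comm, div_mul_eq_mul_div, div_eq_iff (by simp [hc, ht, hPrt])]
  simp only [mul_pow, ← pow_mul]
  rw [mul_comm q₁ p, hpq']
  ring
end

section
/- Let r ≥ 2 be an integer, let a_1, …, a_{r−1} be positive integers, let β_1, …, β_{r−1} be distinct nonzero complex numbers, let h ∈ ℂ[t] be a polynomial, and set Π(t) = ∏_{i=1}^{r−1}(β_i − t)^{a_i}. Fix an index 1 ≤ ι ≤ r−1 and a radius ρ with 0 < ρ < min_{s ≠ ι} |β_s − β_ι|. Let 𝔫 ≥ 1 be an integer and let a_{ij} ∈ ℂ, for 1 ≤ j ≤ 𝔫 and 0 ≤ i ≤ 𝔫 − j, be arbitrary coefficients. Then there exists a polynomial 𝔭 ∈ ℂ[X] of degree at most 𝔫 such that for every 𝔠 ∈ ℂ, the circle integral ∮_{|t − β_ι| = ρ} Σ_{j=1}^{𝔫} Σ_{i=0}^{𝔫−j} a_{ij}·t^i·((𝔠 − h(t))/Π(t))^j dt equals 𝔭(𝔠). -/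
/-- The Abelian integral of a polynomial 1-form of degree at most `𝔫` over the
canonical cycle around the puncture `t = β_ι` of the rectified fiber of the
normal form `ℋ₃ = y·Π(x) + h(x)` in family 𝔉₃ is a polynomial in `𝔠` of degree
at most `𝔫`. -/
theorem stmt8 (r : ℕ) (hr : 2 ≤ r)
    (a : Fin (r - 1) → ℕ) (ha : ∀ i, 1 ≤ a i)
    (β : Fin (r - 1) → ℂ) (hβ0 : ∀ i, β i ≠ 0) (hβinj : Function.Injective β)
    (h : Polynomial ℂ)
    (Pr : ℂ → ℂ) (hPr : ∀ t, Pr t = ∏ i, (β i - t) ^ a i)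
    (ι : Fin (r - 1)) (ρ : ℝ) (hρ0 : 0 < ρ)
    (hρ : ∀ s : Fin (r - 1), s ≠ ι → ρ < ‖β s - β ι‖)
    (𝔫 : ℕ) (h𝔫 : 1 ≤ 𝔫) (aij : ℕ → ℕ → ℂ) :
    ∃ 𝔭 : Polynomial ℂ, 𝔭.degree ≤ (𝔫 : WithBot ℕ) ∧
      ∀ 𝔠 : ℂ,
        (∮ t in C(β ι, ρ),
          ∑ j ∈ Finset.Icc 1 𝔫, ∑ i ∈ Finset.range (𝔫 - j + 1),
            aij i j * t ^ i * ((𝔠 - h.eval t) / Pr t) ^ j) = 𝔭.eval 𝔠 := by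
  classical
  set G : ℕ → ℂ → ℂ := fun k t =>
    ∑ j ∈ Finset.Icc 1 𝔫, ∑ i ∈ Finset.range (𝔫 - j + 1),
      aij i j * t ^ i *
        (((Pr t)⁻¹) ^ j * ((-(h.eval t)) ^ (j - k) * (j.choose k : ℂ))) with hG
  -- pointwise expansion of the integrand as a polynomial in 𝔠
  have key : ∀ (𝔠 t : ℂ),
      (∑ j ∈ Finset.Icc 1 𝔫, ∑ i ∈ Finset.range (𝔫 - j + 1),
        aij i j * t ^ i * ((𝔠 - h.eval t) / Pr t) ^ j)
      = ∑ k ∈ Finset.range (𝔫 + 1), G k t * 𝔠 ^ k := by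
    intro 𝔠 t
    have expand : ∀ j ∈ Finset.Icc 1 𝔫, ((𝔠 - h.eval t) / Pr t) ^ j
        = ∑ k ∈ Finset.range (𝔫 + 1),
            ((Pr t)⁻¹) ^ j * ((-(h.eval t)) ^ (j - k) * (j.choose k : ℂ)) * 𝔠 ^ k := by
      intro j hj
      have hj𝔫 : j ≤ 𝔫 := (Finset.mem_Icc.mp hj).2
      rw [div_eq_mul_inv, show 𝔠 - h.eval t = 𝔠 + -(h.eval t) by ring, mul_pow, add_pow]
      rw [Finset.sum_subset (Finset.range_subset_range.mpr (by omega : j + 1 ≤ 𝔫 + 1))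
        (fun k hk hk' => by
          have hlt : j < k := by
            simp only [Finset.mem_range, not_lt] at hk'
            omega
          simp [Nat.choose_eq_zero_of_lt hlt])]
      rw [Finset.sum_mul]
      exact Finset.sum_congr rfl fun k _ => by ring
    calc
      (∑ j ∈ Finset.Icc 1 𝔫, ∑ i ∈ Finset.range (𝔫 - j + 1),
          aij i j * t ^ i * ((𝔠 - h.eval t) / Pr t) ^ j)
        = ∑ j ∈ Finset.Icc 1 𝔫, ∑ i ∈ Finset.range (𝔫 - j + 1),
            ∑ k ∈ Finset.range (𝔫 + 1),
              aij i j * t ^ i *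
                (((Pr t)⁻¹) ^ j * ((-(h.eval t)) ^ (j - k) * (j.choose k : ℂ)) * 𝔠 ^ k) := by
          refine Finset.sum_congr rfl fun j hj => Finset.sum_congr rfl fun i _ => ?_
          rw [expand j hj, Finset.mul_sum]
      _ = ∑ k ∈ Finset.range (𝔫 + 1), G k t * 𝔠 ^ k := by
          simp only [hG, Finset.sum_mul]
          symm
          rw [Finset.sum_comm]
          refine Finset.sum_congr rfl fun j _ => ?_
          rw [Finset.sum_comm]
          exact Finset.sum_congr rfl fun i _ => Finset.sum_congr rfl fun k _ => by ring
  -- continuity facts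
  have hPrc : Continuous Pr := by
    have : Pr = fun t => ∏ i, (β i - t) ^ a i := funext hPr
    rw [this]
    exact continuous_finset_prod _ fun i _ => ((continuous_const.sub continuous_id).pow _)
  have habs : ∀ θ : ℝ, ‖circleMap (β ι) ρ θ - β ι‖ = ρ := by
    intro θ
    rw [circleMap_sub_center, norm_circleMap_zero, abs_of_pos hρ0]
  have hne : ∀ θ : ℝ, Pr (circleMap (β ι) ρ θ) ≠ 0 := by
    intro θ
    rw [hPr]
    refine Finset.prod_ne_zero_iff.mpr fun i _ => pow_ne_zero _ ?_
    intro hzero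
    have hβi : β i = circleMap (β ι) ρ θ := sub_eq_zero.mp hzero
    by_cases hiι : i = ι
    · subst hiι
      have := habs θ
      rw [← hβi, sub_self, norm_zero] at this
      exact absurd this.symm (ne_of_gt hρ0)
    · have h1 : ‖β i - β ι‖ = ρ := by rw [hβi]; exact habs θ
      exact absurd h1 (ne_of_gt (hρ i hiι))
  have hGcont : ∀ k : ℕ, Continuous fun θ : ℝ => G k (circleMap (β ι) ρ θ) := by
    intro k
    rw [hG]
    apply continuous_finset_sum
    intro j _
    apply continuous_finset_sum
    intro i _
    have hc1 : Continuous fun θ : ℝ => circleMap (β ι) ρ θ := continuous_circleMap _ _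
    have hinv : Continuous fun θ : ℝ => (Pr (circleMap (β ι) ρ θ))⁻¹ :=
      (hPrc.comp hc1).inv₀ hne
    have hh : Continuous fun θ : ℝ => h.eval (circleMap (β ι) ρ θ) :=
      h.continuous.comp hc1
    exact (continuous_const.mul (hc1.pow i)).mul
      ((hinv.pow j).mul (((hh.neg).pow (j - k)).mul continuous_const))
  -- interchange circle integral and finite sum
  have interchange : ∀ 𝔠 : ℂ,
      (∮ t in C(β ι, ρ), ∑ k ∈ Finset.range (𝔫 + 1), G k t * 𝔠 ^ k)
        = ∑ k ∈ Finset.range (𝔫 + 1), (∮ t in C(β ι, ρ), G k t) * 𝔠 ^ k := by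
    intro 𝔠
    have hd : Continuous fun θ : ℝ => deriv (circleMap (β ι) ρ) θ := by
      simp only [deriv_circleMap]
      exact (continuous_circleMap 0 ρ).mul continuous_const
    simp only [circleIntegral]
    rw [intervalIntegral.integral_congr
      (g := fun θ => ∑ k ∈ Finset.range (𝔫 + 1),
        deriv (circleMap (β ι) ρ) θ • (G k (circleMap (β ι) ρ θ) * 𝔠 ^ k))
      (fun θ _ => by rw [Finset.smul_sum])]
    rw [intervalIntegral.integral_finset_sum
      (f := fun k θ => deriv (circleMap (β ι) ρ) θ • (G k (circleMap (β ι) ρ θ) * 𝔠 ^ k))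
      (fun k _ => (hd.smul ((hGcont k).mul continuous_const)).intervalIntegrable _ _)]
    refine Finset.sum_congr rfl fun k _ => ?_
    rw [← intervalIntegral.integral_mul_const]
    refine intervalIntegral.integral_congr fun θ _ => ?_
    simp only [smul_eq_mul]
    ring
  -- the polynomial
  refine ⟨∑ k ∈ Finset.range (𝔫 + 1),
      Polynomial.C (∮ t in C(β ι, ρ), G k t) * Polynomial.X ^ k, ?_, ?_⟩
  · refine (Polynomial.degree_sum_le _ _).trans (Finset.sup_le fun k hk => ?_)
    refine (Polynomial.degree_C_mul_X_pow_le _ _).trans ?_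
    exact_mod_cast Nat.cast_le.mpr (Finset.mem_range_succ_iff.mp hk)
  · intro 𝔠
    have : (fun t => ∑ j ∈ Finset.Icc 1 𝔫, ∑ i ∈ Finset.range (𝔫 - j + 1),
        aij i j * t ^ i * ((𝔠 - h.eval t) / Pr t) ^ j)
        = fun t => ∑ k ∈ Finset.range (𝔫 + 1), G k t * 𝔠 ^ k := funext fun t => key 𝔠 t
    rw [this, interchange 𝔠]
    simp [Polynomial.eval_finset_sum]
end

section
/- Let 𝔪 ≥ 2 and ν ≥ 1 be integers. Then ∮_{|t+1|=1} (t+1)^{−ν}·(t−1)^{−ν(𝔪−1)} dt = 2π√(−1)·(−1)^{ν(𝔪+1)}·2^{1−ν𝔪}·C(ν𝔪−2, ν−1) and ∮_{|t−1|=1} (t+1)^{−ν}·(t−1)^{−ν(𝔪−1)} dt = 2π√(−1)·(−1)^{ν(𝔪−1)−1}·2^{1−ν𝔪}·C(ν𝔪−2, ν−1); in particular both integrals are nonzero. Here C(a,b) denotes the binomial coefficient, and C(ν𝔪−2, ν−1) = C(ν𝔪−2, ν(𝔪−1)−1). -/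
open Metric Complex

/-- Expected value (times `2πi`) of the residue integral around `-1`. -/
noncomputable def rr (a b : ℕ) : ℂ :=
  if a = 0 then 0 else (-1) ^ b * ((2 : ℂ) ^ (a + b - 1))⁻¹ * ((a + b - 2).choose (a - 1))

/-- Expected value (times `2πi`) of the residue integral around `1`. -/
noncomputable def ss (a b : ℕ) : ℂ :=
  if b = 0 then 0 else (-1) ^ (b - 1) * ((2 : ℂ) ^ (a + b - 1))⁻¹ * ((a + b - 2).choose (b - 1))

lemma hr (a b : ℕ) : rr a (b + 1) - rr (a + 1) b = 2 * rr (a + 1) (b + 1) := by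
  rcases Nat.eq_zero_or_pos a with rfl | ha
  · simp only [rr, if_pos rfl, if_neg (Nat.one_ne_zero)]
    norm_num [pow_succ]
    ring
  · obtain ⟨A, rfl⟩ := Nat.exists_eq_add_of_le ha
    simp only [rr, if_neg (by omega : ¬ 1 + A = 0), if_neg (by omega : ¬ 1 + A + 1 = 0),
      show 1 + A + (b + 1) - 1 = A + b + 1 by omega,
      show 1 + A + (b + 1) - 2 = A + b by omega,
      show 1 + A - 1 = A by omega,
      show 1 + A + 1 + b - 1 = A + b + 1 by omega,
      show 1 + A + 1 + b - 2 = A + b by omega,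
      show 1 + A + 1 - 1 = A + 1 by omega,
      show 1 + A + 1 + (b + 1) - 1 = A + b + 2 by omega,
      show 1 + A + 1 + (b + 1) - 2 = A + b + 1 by omega,
      show A + b + 1 = (A + b) + 1 by omega]
    rw [Nat.choose_succ_succ (A + b) A]
    push_cast
    rw [pow_succ, pow_succ]
    have h2 : (2 : ℂ) ^ (A + b) ≠ 0 := pow_ne_zero _ two_ne_zero
    field_simp
    ring

lemma hs (a b : ℕ) : ss a (b + 1) - ss (a + 1) b = 2 * ss (a + 1) (b + 1) := by
  rcases Nat.eq_zero_or_pos b with rfl | hb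
  · simp only [ss, if_pos rfl, if_neg (Nat.one_ne_zero)]
    norm_num [pow_succ]
    ring
  · obtain ⟨B, rfl⟩ := Nat.exists_eq_add_of_le hb
    simp only [ss, if_neg (by omega : ¬ 1 + B + 1 = 0), if_neg (by omega : ¬ 1 + B = 0),
      show a + (1 + B + 1) - 1 = a + B + 1 by omega,
      show a + (1 + B + 1) - 2 = a + B by omega,
      show 1 + B + 1 - 1 = B + 1 by omega,
      show a + 1 + (1 + B) - 1 = a + B + 1 by omega,
      show a + 1 + (1 + B) - 2 = a + B by omega,
      show 1 + B - 1 = B by omega,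
      show a + 1 + (1 + B + 1) - 1 = a + B + 2 by omega,
      show a + 1 + (1 + B + 1) - 2 = a + B + 1 by omega,
      show a + B + 1 = (a + B) + 1 by omega]
    rw [Nat.choose_succ_succ (a + B) B]
    push_cast
    rw [pow_succ, pow_succ]
    have h2 : (2 : ℂ) ^ (a + B) ≠ 0 := pow_ne_zero _ two_ne_zero
    field_simp
    ring

lemma sph {cc : ℂ} (hcc : cc = 1 ∨ cc = -1) {t : ℂ} (ht : t ∈ sphere cc 1) :
    t + 1 ≠ 0 ∧ t - 1 ≠ 0 := by
  rw [mem_sphere_iff_norm] at ht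
  constructor <;> intro h <;> rcases hcc with rfl | rfl
  · rw [show t = -1 by linear_combination h] at ht
    norm_num [show (-1 : ℂ) - 1 = -2 by ring] at ht
  · rw [show t = -1 by linear_combination h] at ht
    norm_num at ht
  · rw [show t = 1 by linear_combination h] at ht
    norm_num at ht
  · rw [show t = 1 by linear_combination h] at ht
    norm_num [show (1 : ℂ) - -1 = 2 by ring] at ht

lemma integ (a b : ℕ) {cc : ℂ} (hcc : cc = 1 ∨ cc = -1) :
    CircleIntegrable (fun t : ℂ => ((t + 1) ^ a * (t - 1) ^ b)⁻¹) cc 1 := by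
  apply ContinuousOn.circleIntegrable zero_le_one
  apply ContinuousOn.inv₀
  · exact (((continuousOn_id.add continuousOn_const).pow a).mul
      ((continuousOn_id.sub continuousOn_const).pow b))
  · intro t ht
    exact mul_ne_zero (pow_ne_zero _ (sph hcc ht).1) (pow_ne_zero _ (sph hcc ht).2)

lemma recInt (a b : ℕ) {cc : ℂ} (hcc : cc = 1 ∨ cc = -1) :
    (∮ t in C(cc, 1), ((t + 1) ^ a * (t - 1) ^ (b + 1))⁻¹)
      - (∮ t in C(cc, 1), ((t + 1) ^ (a + 1) * (t - 1) ^ b)⁻¹)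
    = 2 * ∮ t in C(cc, 1), ((t + 1) ^ (a + 1) * (t - 1) ^ (b + 1))⁻¹ := by
  rw [← circleIntegral.integral_sub (integ a (b+1) hcc) (integ (a+1) b hcc),
    ← smul_eq_mul, ← circleIntegral.integral_smul]
  refine circleIntegral.integral_congr zero_le_one fun t ht => ?_
  obtain ⟨hu, hv⟩ := sph hcc ht
  simp only [smul_eq_mul]
  field_simp
  ring

lemma zeroInt (b : ℕ) (cc w : ℂ) (h : ∀ z ∈ closedBall cc (1 : ℝ), z ≠ w) :
    (∮ t in C(cc, 1), ((t - w) ^ b)⁻¹) = 0 := by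
  refine Complex.circleIntegral_eq_zero_of_differentiable_on_off_countable zero_le_one
    Set.countable_empty ?_ fun z hz => ?_
  · exact ((continuousOn_id.sub continuousOn_const).pow b).inv₀
      fun z hz => pow_ne_zero _ (sub_ne_zero.2 (h z hz))
  · exact (((differentiableAt_id.sub_const w).pow b).inv
      (pow_ne_zero _ (sub_ne_zero.2 (h z (ball_subset_closedBall hz.1)))))

lemma poleInt (n : ℕ) (cc w : ℂ) (hw : w ∈ ball cc (1 : ℝ)) :
    (∮ t in C(cc, 1), ((t - w) ^ n)⁻¹) = if n = 1 then 2 * Real.pi * I else 0 := by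
  have hfun : (fun t : ℂ => ((t - w) ^ n)⁻¹) = fun t => (t - w) ^ (-(n : ℤ)) := by
    funext t; rw [← zpow_natCast, ← zpow_neg]
  rcases eq_or_ne n 1 with rfl | hn
  · simp only [if_pos rfl, pow_one]
    exact circleIntegral.integral_sub_inv_of_mem_ball hw
  · rw [if_neg hn, hfun]
    exact circleIntegral.integral_sub_zpow_of_ne (by omega) _ _ _

lemma keyI (a b : ℕ) :
    (∮ t in C((-1 : ℂ), 1), ((t + 1) ^ a * (t - 1) ^ b)⁻¹) = 2 * Real.pi * I * rr a b := by
  induction a generalizing b with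
  | zero =>
    rw [show rr 0 b = 0 from if_pos rfl, mul_zero]
    have : (fun t : ℂ => ((t + 1) ^ 0 * (t - 1) ^ b)⁻¹) = fun t => ((t - 1) ^ b)⁻¹ := by
      funext t; rw [pow_zero, one_mul]
    rw [show (∮ t in C((-1:ℂ), 1), ((t + 1) ^ 0 * (t - 1) ^ b)⁻¹)
        = ∮ t in C((-1:ℂ), 1), ((t - 1) ^ b)⁻¹ from by rw [this]]
    refine zeroInt b (-1) 1 fun z hz => ?_
    intro hzw
    rw [mem_closedBall, hzw, Complex.dist_eq, show (1 : ℂ) - -1 = 2 by ring] at hz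
    rw [Complex.norm_two] at hz
    norm_num at hz
  | succ a iha =>
    induction b with
    | zero =>
      have : (fun t : ℂ => ((t + 1) ^ (a + 1) * (t - 1) ^ 0)⁻¹)
          = fun t => ((t - (-1)) ^ (a + 1))⁻¹ := by
        funext t; rw [pow_zero, mul_one, sub_neg_eq_add]
      rw [show (∮ t in C((-1:ℂ), 1), ((t + 1) ^ (a + 1) * (t - 1) ^ 0)⁻¹)
          = ∮ t in C((-1:ℂ), 1), ((t - (-1)) ^ (a + 1))⁻¹ from by rw [this],
        poleInt (a + 1) (-1) (-1) (by simp)]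
      rcases Nat.eq_zero_or_pos a with rfl | ha
      · norm_num [rr]
      · rw [if_neg (by omega)]
        rw [show rr (a + 1) 0 = 0 from ?_, mul_zero]
        rw [rr, if_neg (by omega), show a + 1 + 0 - 2 = a - 1 by omega,
          show a + 1 - 1 = a by omega, Nat.choose_eq_zero_of_lt (by omega)]
        simp
    | succ b ihb =>
      have h := recInt a b (Or.inr rfl)
      rw [iha (b + 1), ihb] at h
      have h2 := hr a b
      linear_combination (2 * Real.pi * I * h2 - h) / 2

lemma keyJ (a b : ℕ) :
    (∮ t in C((1 : ℂ), 1), ((t + 1) ^ a * (t - 1) ^ b)⁻¹) = 2 * Real.pi * I * ss a b := by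
  induction a generalizing b with
  | zero =>
    have : (fun t : ℂ => ((t + 1) ^ 0 * (t - 1) ^ b)⁻¹) = fun t => ((t - 1) ^ b)⁻¹ := by
      funext t; rw [pow_zero, one_mul]
    rw [show (∮ t in C((1:ℂ), 1), ((t + 1) ^ 0 * (t - 1) ^ b)⁻¹)
        = ∮ t in C((1:ℂ), 1), ((t - 1) ^ b)⁻¹ from by rw [this],
      poleInt b 1 1 (by simp)]
    rcases eq_or_ne b 1 with rfl | hb
    · norm_num [ss]
    · rw [if_neg hb]
      rcases Nat.eq_zero_or_pos b with rfl | hb0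
      · norm_num [ss]
      · rw [show ss 0 b = 0 from ?_, mul_zero]
        rw [ss, if_neg (by omega), show 0 + b - 2 = b - 2 by omega,
          Nat.choose_eq_zero_of_lt (by omega)]
        simp
  | succ a iha =>
    induction b with
    | zero =>
      have : (fun t : ℂ => ((t + 1) ^ (a + 1) * (t - 1) ^ 0)⁻¹)
          = fun t => ((t - (-1)) ^ (a + 1))⁻¹ := by
        funext t; rw [pow_zero, mul_one, sub_neg_eq_add]
      rw [show (∮ t in C((1:ℂ), 1), ((t + 1) ^ (a + 1) * (t - 1) ^ 0)⁻¹)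
          = ∮ t in C((1:ℂ), 1), ((t - (-1)) ^ (a + 1))⁻¹ from by rw [this]]
      rw [show ss (a + 1) 0 = 0 from if_pos rfl, mul_zero]
      refine zeroInt (a + 1) 1 (-1) fun z hz => ?_
      intro hzw
      rw [mem_closedBall, hzw, Complex.dist_eq, show (-1 : ℂ) - 1 = -2 by ring,
        norm_neg, Complex.norm_two] at hz
      norm_num at hz
    | succ b ihb =>
      have h := recInt a b (Or.inl rfl)
      rw [iha (b + 1), ihb] at h
      have h2 := hs a b
      linear_combination (2 * Real.pi * I * h2 - h) / 2

lemma twoPow {n : ℕ} (hn : 1 ≤ n) : (2 : ℂ) ^ ((1 : ℤ) - (n : ℕ)) = ((2 : ℂ) ^ (n - 1))⁻¹ := by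
  obtain ⟨k, rfl⟩ := Nat.exists_eq_add_of_le hn
  rw [show ((1 : ℤ) - ((1 + k : ℕ) : ℤ)) = -(k : ℤ) by push_cast; ring, zpow_neg, zpow_natCast,
    show 1 + k - 1 = k by omega]

/-- Residue evaluations for `ℋ(x,y) = y(−1−x)(1−x)^{𝔪−1}` in family 𝔉₃:
the circle integrals of `(t+1)^{−ν}(t−1)^{−ν(𝔪−1)}` around `−1` and `1`. -/
theorem stmt9 (𝔪 ν : ℕ) (h𝔪 : 2 ≤ 𝔪) (hν : 1 ≤ ν) :
    (∮ t in C(-1, 1), ((t + 1) ^ ν * (t - 1) ^ (ν * (𝔪 - 1)))⁻¹)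
      = 2 * Real.pi * Complex.I * (-1 : ℂ) ^ (ν * (𝔪 + 1)) *
        (2 : ℂ) ^ ((1 : ℤ) - (ν * 𝔪 : ℕ)) * (Nat.choose (ν * 𝔪 - 2) (ν - 1) : ℂ) ∧
    (∮ t in C(1, 1), ((t + 1) ^ ν * (t - 1) ^ (ν * (𝔪 - 1)))⁻¹)
      = 2 * Real.pi * Complex.I * (-1 : ℂ) ^ (ν * (𝔪 - 1) - 1) *
        (2 : ℂ) ^ ((1 : ℤ) - (ν * 𝔪 : ℕ)) * (Nat.choose (ν * 𝔪 - 2) (ν - 1) : ℂ) ∧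
    (∮ t in C(-1, 1), ((t + 1) ^ ν * (t - 1) ^ (ν * (𝔪 - 1)))⁻¹) ≠ 0 ∧
    (∮ t in C(1, 1), ((t + 1) ^ ν * (t - 1) ^ (ν * (𝔪 - 1)))⁻¹) ≠ 0 ∧
    Nat.choose (ν * 𝔪 - 2) (ν - 1) = Nat.choose (ν * 𝔪 - 2) (ν * (𝔪 - 1) - 1) := by
  have hsum : ν + ν * (𝔪 - 1) = ν * 𝔪 := by
    have h1 : 𝔪 = (𝔪 - 1) + 1 := by omega
    conv_rhs => rw [h1]
    rw [mul_add, mul_one, Nat.add_comm]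
  have hdouble : ν * 2 ≤ ν * 𝔪 := Nat.mul_le_mul_left ν h𝔪
  have hb1 : 1 ≤ ν * (𝔪 - 1) := Nat.one_le_iff_ne_zero.2 (Nat.mul_ne_zero (by omega) (by omega))
  have hn2 : 2 ≤ ν * 𝔪 := by omega
  have hk : ν - 1 ≤ ν * 𝔪 - 2 := by omega
  have hchoose : (ν * 𝔪 - 2).choose (ν - 1) = (ν * 𝔪 - 2).choose (ν * (𝔪 - 1) - 1) := by
    rw [show ν * (𝔪 - 1) - 1 = (ν * 𝔪 - 2) - (ν - 1) by omega]
    exact (Nat.choose_symm hk).symm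
  have hsign : (-1 : ℂ) ^ (ν * (𝔪 + 1)) = (-1 : ℂ) ^ (ν * (𝔪 - 1)) := by
    rw [show ν * (𝔪 + 1) = ν * (𝔪 - 1) + 2 * ν by
        have h1 : 𝔪 + 1 = (𝔪 - 1) + 2 := by omega
        rw [h1, Nat.mul_add]; ring,
      pow_add, pow_mul (-1 : ℂ) 2 ν, neg_one_sq, one_pow, mul_one]
  have hrr : rr ν (ν * (𝔪 - 1))
      = (-1 : ℂ) ^ (ν * (𝔪 + 1)) * (2 : ℂ) ^ ((1 : ℤ) - (ν * 𝔪 : ℕ)) *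
        ((ν * 𝔪 - 2).choose (ν - 1) : ℂ) := by
    rw [rr, if_neg (by omega), hsum, hsign, twoPow (by omega)]
  have hss : ss ν (ν * (𝔪 - 1))
      = (-1 : ℂ) ^ (ν * (𝔪 - 1) - 1) * (2 : ℂ) ^ ((1 : ℤ) - (ν * 𝔪 : ℕ)) *
        ((ν * 𝔪 - 2).choose (ν - 1) : ℂ) := by
    rw [ss, if_neg (by omega), hsum, twoPow (by omega), hchoose]
  have e1 : (∮ t in C((-1 : ℂ), 1), ((t + 1) ^ ν * (t - 1) ^ (ν * (𝔪 - 1)))⁻¹)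
      = 2 * Real.pi * Complex.I * (-1 : ℂ) ^ (ν * (𝔪 + 1)) *
        (2 : ℂ) ^ ((1 : ℤ) - (ν * 𝔪 : ℕ)) * ((ν * 𝔪 - 2).choose (ν - 1) : ℂ) := by
    rw [keyI, hrr]; ring
  have e2 : (∮ t in C((1 : ℂ), 1), ((t + 1) ^ ν * (t - 1) ^ (ν * (𝔪 - 1)))⁻¹)
      = 2 * Real.pi * Complex.I * (-1 : ℂ) ^ (ν * (𝔪 - 1) - 1) *
        (2 : ℂ) ^ ((1 : ℤ) - (ν * 𝔪 : ℕ)) * ((ν * 𝔪 - 2).choose (ν - 1) : ℂ) := by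
    rw [keyJ, hss]; ring
  have hpi : (Real.pi : ℂ) ≠ 0 := Complex.ofReal_ne_zero.2 Real.pi_ne_zero
  have hch : ((ν * 𝔪 - 2).choose (ν - 1) : ℂ) ≠ 0 :=
    Nat.cast_ne_zero.2 (Nat.choose_pos hk).ne'
  have hz2 : (2 : ℂ) ^ ((1 : ℤ) - (ν * 𝔪 : ℕ)) ≠ 0 := zpow_ne_zero _ two_ne_zero
  refine ⟨e1, e2, ?_, ?_, hchoose⟩
  · rw [e1]
    exact mul_ne_zero (mul_ne_zero (mul_ne_zero (mul_ne_zero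
      (mul_ne_zero two_ne_zero hpi) Complex.I_ne_zero)
      (pow_ne_zero _ (by norm_num))) hz2) hch
  · rw [e2]
    exact mul_ne_zero (mul_ne_zero (mul_ne_zero (mul_ne_zero
      (mul_ne_zero two_ne_zero hpi) Complex.I_ne_zero)
      (pow_ne_zero _ (by norm_num))) hz2) hch
end

section
/- Let p, p₁, q, q₁, k be integers with 0 ≤ p₁ < p, q ≥ 1, q₁ ≥ 0, p·q₁ − q·p₁ = 1 and k ≥ 0, and let P ∈ ℂ[x] be a polynomial of degree at most k − 1 (with P = 0 when k = 0). For 𝔠 ≠ 0 and t ≠ 0 set x(t,𝔠) = t^p/𝔠^q and y(t,𝔠) = 𝔠^{qk}·(𝔠^{q₁} − t^{p₁}·P(x(t,𝔠)))/t^{p₁+pk}. Let n ≥ 1 be an integer and let a_{ij} ∈ ℂ, for 1 ≤ j ≤ n and 0 ≤ i ≤ n − j, be arbitrary coefficients. Then there exists a polynomial 𝔭 ∈ ℂ[X] of degree at most ⌊(n+1)/(p₁ + p(k+1))⌋ such that for every 𝔠 ∈ ℂ with 𝔠 ≠ 0, the circle integral ∮_{|t|=1} Σ_{j=1}^{n}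 Σ_{i=0}^{n−j} a_{ij}·x(t,𝔠)^i·y(t,𝔠)^j·(p·t^{p−1}/𝔠^q) dt equals 𝔭(𝔠). -/
open Complex Polynomial Finset Metric Real

/-- t-exponent of the monomial indexed by (j,i,l,d). -/
def mExp (p p₁ k j i l d : ℕ) : ℤ :=
  (p : ℤ) * i + p₁ * l + p * d + ((p : ℤ) - 1) - j * ((p₁ : ℤ) + p * k)

/-- 𝔠-exponent of the monomial indexed by (j,i,l,d). -/
def eExp (q q₁ k j i l d : ℕ) : ℤ :=
  (q₁ : ℤ) * ((j : ℤ) - l) + (j : ℤ) * (q * k) - ((q : ℤ) * i + q * d + q)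

lemma comb1 {p p₁ q q₁ k j i l d : ℕ}
    (hpq : (p * q₁ : ℤ) - q * p₁ = 1)
    (hm : mExp p p₁ k j i l d = -1) :
    (p : ℤ) * eExp q q₁ k j i l d = (j : ℤ) - l := by
  unfold mExp at hm
  unfold eExp
  linear_combination ((j : ℤ) - l) * hpq - (q : ℤ) * hm

lemma comb2 {p p₁ q q₁ k j i l d : ℕ} (hp : p₁ < p)
    (hpq : (p * q₁ : ℤ) - q * p₁ = 1)
    (hm : mExp p p₁ k j i l d = -1) :
    (p₁ : ℤ) * eExp q q₁ k j i l d = (i : ℤ) + d + 1 - (j : ℤ) * k := by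
  have h1 := comb1 hpq hm
  have hp0 : (p : ℤ) ≠ 0 := by
    have : 0 < p := lt_of_le_of_lt (Nat.zero_le _) hp
    exact_mod_cast this.ne'
  apply mul_left_cancel₀ hp0
  unfold mExp at hm
  linear_combination (p₁ : ℤ) * h1 - hm

lemma comb_nonneg {p p₁ q q₁ k j i l d : ℕ} (hp : p₁ < p)
    (hpq : (p * q₁ : ℤ) - q * p₁ = 1) (hl : l ≤ j)
    (hm : mExp p p₁ k j i l d = -1) :
    0 ≤ eExp q q₁ k j i l d := by
  have h1 := comb1 hpq hm
  have hp0 : (0 : ℤ) < p := by exact_mod_cast lt_of_le_of_lt (Nat.zero_le _) hp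
  have hjl : (0 : ℤ) ≤ (j : ℤ) - l := by
    have : (l : ℤ) ≤ j := by exact_mod_cast hl
    linarith
  nlinarith

lemma comb_bound {p p₁ q q₁ k n j i l d : ℕ} (hp : p₁ < p)
    (hpq : (p * q₁ : ℤ) - q * p₁ = 1)
    (hjn : j ≤ n) (hi : (i : ℤ) ≤ (n : ℤ) - j) (hl : l ≤ j)
    (hd : (d : ℤ) ≤ (l : ℤ) * k - l)
    (hm : mExp p p₁ k j i l d = -1) :
    eExp q q₁ k j i l d * ((p₁ : ℤ) + p * (k + 1)) ≤ (n : ℤ) + 1 := by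
  have h1 := comb1 hpq hm
  have h2 := comb2 hp hpq hm
  have h3 : (p : ℤ) * eExp q q₁ k j i l d * k = ((j : ℤ) - l) * k := by rw [h1]
  have hl' : (0 : ℤ) ≤ l := by positivity
  have hlj : (l : ℤ) ≤ j := by exact_mod_cast hl
  set e := eExp q q₁ k j i l d with he
  have expand : e * ((p₁ : ℤ) + p * (k + 1)) =
      (p₁ : ℤ) * e + ((p : ℤ) * e) * k + (p : ℤ) * e := by ring
  rw [expand, h1, h2]
  have h3' : (p : ℤ) * e * k = ((j : ℤ) - l) * k := h3
  nlinarith [h3']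

/-- coefficient bound forcing `d ≤ l(k-1)` when the coefficient is nonzero -/
lemma coeff_bound {k : ℕ} {P : Polynomial ℂ} (hP : P.degree < (k : WithBot ℕ))
    {l d : ℕ} (h : (P ^ l).coeff d ≠ 0) : (d : ℤ) ≤ (l : ℤ) * k - l := by
  rcases Nat.eq_zero_or_pos l with rfl | hl
  · have : d = 0 := by
      by_contra hd
      simp [Polynomial.coeff_one, hd] at h
    simp [this]
  · have hP0 : P ≠ 0 := by
      rintro rfl
      simp [zero_pow hl.ne'] at h
    have h1 : P.natDegree < k := by
      have := (Polynomial.degree_eq_natDegree hP0) ▸ hP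
      exact_mod_cast this
    have hk1 : 1 ≤ k := lt_of_le_of_lt (Nat.zero_le _) h1
    have h2 : d ≤ (P ^ l).natDegree := Polynomial.le_natDegree_of_ne_zero h
    have h3 : (P ^ l).natDegree ≤ l * P.natDegree := Polynomial.natDegree_pow_le
    have h4 : d ≤ l * (k - 1) :=
      h2.trans (h3.trans (Nat.mul_le_mul_left _ (by omega)))
    have h5 : (d : ℤ) ≤ ((l * (k - 1) : ℕ) : ℤ) := by exact_mod_cast h4
    calc (d : ℤ) ≤ ((l * (k - 1) : ℕ) : ℤ) := h5
      _ = (l : ℤ) * k - l := by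
          push_cast [Nat.cast_sub hk1]
          ring

lemma circleIntegrable_zpow' (m : ℤ) :
    CircleIntegrable (fun z : ℂ => z ^ m) 0 1 := by
  have h : CircleIntegrable (fun z : ℂ => (z - 0) ^ m) 0 1 := by
    rw [circleIntegrable_sub_zpow_iff]
    right; right
    simp
  simpa only [sub_zero] using h

lemma circleIntegrable_monomial (A : ℂ) (m : ℤ) :
    CircleIntegrable (fun z : ℂ => A * z ^ m) 0 1 :=
  (circleIntegrable_zpow' m).const_mul A

lemma circleIntegrable_finset_sum {ι : Type*} (s : Finset ι) (f : ι → ℂ → ℂ)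
    {c : ℂ} {R : ℝ} (h : ∀ i ∈ s, CircleIntegrable (f i) c R) :
    CircleIntegrable (fun z => ∑ i ∈ s, f i z) c R := by
  have := IntervalIntegrable.sum s (μ := MeasureTheory.volume) (a := 0) (b := 2 * π)
    (f := fun i => fun θ : ℝ => f i (circleMap c R θ)) (fun i hi => h i hi)
  show IntervalIntegrable (fun θ : ℝ => ∑ i ∈ s, f i (circleMap c R θ))
    MeasureTheory.volume 0 (2 * π)
  rw [Finset.sum_fn] at this
  exact this

lemma circleIntegral_finset_sum {ι : Type*} (s : Finset ι) (f : ι → ℂ → ℂ)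
    {c : ℂ} {R : ℝ} (h : ∀ i ∈ s, CircleIntegrable (f i) c R) :
    (∮ z in C(c, R), ∑ i ∈ s, f i z) = ∑ i ∈ s, ∮ z in C(c, R), f i z := by
  simp only [circleIntegral, Finset.smul_sum]
  rw [intervalIntegral.integral_finset_sum (fun i hi => (h i hi).out)]

lemma circleIntegral_zpow (m : ℤ) :
    (∮ z in C((0 : ℂ), 1), z ^ m) = if m = -1 then 2 * π * I else 0 := by
  split_ifs with h
  · subst h
    have h0 : (0 : ℂ) ∈ Metric.ball (0 : ℂ) 1 := by simp
    have := circleIntegral.integral_sub_inv_of_mem_ball h0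
    simp only [sub_zero] at this
    simpa only [zpow_neg_one] using this
  · simpa only [sub_zero] using circleIntegral.integral_sub_zpow_of_ne h 0 0 1

/-- For the normal form `ℋ(x,y) = x^{p₁}(x^k y + P(x))^p` of a primitive
polynomial of type (0,2), the rectified Abelian integral of a polynomial
1-form of degree at most `n` is a polynomial in `𝔠` of degree at most
`⌊(n+1)/(p₁+p(k+1))⌋`. -/
theorem stmt10 (p p₁ q q₁ k : ℕ) (hp : p₁ < p) (hq : 1 ≤ q) (hq₁ : 0 ≤ q₁)
    (hpq : (p * q₁ : ℤ) - q * p₁ = 1)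
    (P : Polynomial ℂ) (hP : P.degree < (k : WithBot ℕ))
    (xx yy : ℂ → ℂ → ℂ)
    (hxx : ∀ t 𝔠, xx t 𝔠 = t ^ p / 𝔠 ^ q)
    (hyy : ∀ t 𝔠, yy t 𝔠 = 𝔠 ^ (q * k) * (𝔠 ^ q₁ - t ^ p₁ * P.eval (xx t 𝔠)) /
        t ^ (p₁ + p * k))
    (n : ℕ) (hn : 1 ≤ n) (aij : ℕ → ℕ → ℂ) :
    ∃ 𝔭 : Polynomial ℂ, 𝔭.degree ≤ (((n + 1) / (p₁ + p * (k + 1)) : ℕ) : WithBot ℕ) ∧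
      ∀ 𝔠 : ℂ, 𝔠 ≠ 0 →
        (∮ t in C(0, 1),
          ∑ j ∈ Finset.Icc 1 n, ∑ i ∈ Finset.range (n - j + 1),
            aij i j * (xx t 𝔠) ^ i * (yy t 𝔠) ^ j * ((p : ℂ) * t ^ (p - 1) / 𝔠 ^ q))
          = 𝔭.eval 𝔠 := by
  have hp1 : 1 ≤ p := lt_of_le_of_lt (Nat.zero_le _) hp
  -- the coefficient of the monomial (j,i,l,d)
  set b : ℕ → ℕ → ℕ → ℕ → ℂ :=
    fun j i l d => aij i j * p * (j.choose l : ℂ) * (-1) ^ l * (P ^ l).coeff d with hb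
  -- the polynomial
  refine ⟨∑ j ∈ Finset.Icc 1 n, ∑ i ∈ Finset.range (n - j + 1),
      ∑ l ∈ Finset.range (j + 1), ∑ d ∈ Finset.range (n * k + 1),
      if mExp p p₁ k j i l d = -1 then
        Polynomial.C (2 * π * I * b j i l d) * Polynomial.X ^ (eExp q q₁ k j i l d).toNat
      else 0, ?_, ?_⟩
  · -- degree bound
    refine (Polynomial.degree_sum_le _ _).trans (Finset.sup_le fun j hj => ?_)
    refine (Polynomial.degree_sum_le _ _).trans (Finset.sup_le fun i hi => ?_)
    refine (Polynomial.degree_sum_le _ _).trans (Finset.sup_le fun l hl => ?_)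
    refine (Polynomial.degree_sum_le _ _).trans (Finset.sup_le fun d hd => ?_)
    split_ifs with hm
    · rcases eq_or_ne (b j i l d) 0 with hb0 | hb0
      · simp [hb0]
      · have hcoeff : (P ^ l).coeff d ≠ 0 := by
          intro h
          apply hb0
          rw [hb]
          simp [h]
        have hjmem := Finset.mem_Icc.1 hj
        have himem : i ≤ n - j := by
          have := Finset.mem_range.1 hi; omega
        have hlmem : l ≤ j := by
          have := Finset.mem_range.1 hl; omega
        have hdbd : (d : ℤ) ≤ (l : ℤ) * k - l := coeff_bound hP hcoeff
        have hibd : (i : ℤ) ≤ (n : ℤ) - j := by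
          have h1 : (i : ℤ) ≤ ((n - j : ℕ) : ℤ) := by exact_mod_cast himem
          rwa [Nat.cast_sub hjmem.2] at h1
        have hE1 : 0 ≤ eExp q q₁ k j i l d := comb_nonneg hp hpq hlmem hm
        have hE2 := comb_bound hp hpq hjmem.2 hibd hlmem hdbd hm
        have hEnat : (eExp q q₁ k j i l d).toNat ≤ (n + 1) / (p₁ + p * (k + 1)) := by
          rw [Nat.le_div_iff_mul_le (by positivity)]
          have : ((eExp q q₁ k j i l d).toNat : ℤ) * ((p₁ : ℤ) + p * (k + 1)) ≤ (n : ℤ) + 1 := by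
            rw [Int.toNat_of_nonneg hE1]; exact hE2
          exact_mod_cast this
        refine (Polynomial.degree_C_mul_X_pow_le _ _).trans ?_
        exact_mod_cast Nat.cast_le.2 hEnat
    · simp
  · -- the integral computation
    intro 𝔠 h𝔠
    have h𝔠q : 𝔠 ^ q ≠ 0 := pow_ne_zero _ h𝔠
    -- the expansion of the integrand on the unit circle
    have key : ∀ t : ℂ, t ∈ sphere (0 : ℂ) 1 →
        (∑ j ∈ Finset.Icc 1 n, ∑ i ∈ Finset.range (n - j + 1),
          aij i j * (xx t 𝔠) ^ i * (yy t 𝔠) ^ j * ((p : ℂ) * t ^ (p - 1) / 𝔠 ^ q)) =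
        ∑ j ∈ Finset.Icc 1 n, ∑ i ∈ Finset.range (n - j + 1),
          ∑ l ∈ Finset.range (j + 1), ∑ d ∈ Finset.range (n * k + 1),
          (b j i l d * ((𝔠 ^ q₁) ^ (j - l) * 𝔠 ^ (j * (q * k)) / 𝔠 ^ (q * i + q * d + q))) *
            t ^ (mExp p p₁ k j i l d) := by
      intro t ht
      have ht0 : t ≠ 0 := by
        intro h
        rw [h] at ht
        simp at ht
      refine Finset.sum_congr rfl fun j hj => Finset.sum_congr rfl fun i hi => ?_
      rw [hyy, hxx]
      have hjn : j ≤ n := (Finset.mem_Icc.1 hj).2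
      rw [div_pow (𝔠 ^ (q * k) * (𝔠 ^ q₁ - t ^ p₁ * P.eval (t ^ p / 𝔠 ^ q)))
          (t ^ (p₁ + p * k)) j,
        mul_pow (𝔠 ^ (q * k)) (𝔠 ^ q₁ - t ^ p₁ * P.eval (t ^ p / 𝔠 ^ q)) j,
        show 𝔠 ^ q₁ - t ^ p₁ * P.eval (t ^ p / 𝔠 ^ q) =
          -(t ^ p₁ * P.eval (t ^ p / 𝔠 ^ q)) + 𝔠 ^ q₁ by ring,
        add_pow]
      simp only [Finset.mul_sum, Finset.sum_mul, Finset.sum_div]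
      refine Finset.sum_congr rfl fun l hl => ?_
      have hlj : l ≤ j := by have := Finset.mem_range.1 hl; omega
      have hdeg : (P ^ l).natDegree < n * k + 1 := by
        have h1 : (P ^ l).natDegree ≤ l * P.natDegree := Polynomial.natDegree_pow_le
        have h2 : P.natDegree ≤ k := by
          rcases eq_or_ne P 0 with rfl | hP0
          · simp
          · exact Polynomial.natDegree_le_iff_degree_le.2 hP.le
        have : l * P.natDegree ≤ n * k :=
          Nat.mul_le_mul (hlj.trans hjn) h2
        omega
      rw [neg_pow (t ^ p₁ * P.eval (t ^ p / 𝔠 ^ q)) l,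
        mul_pow (t ^ p₁) (P.eval (t ^ p / 𝔠 ^ q)) l,
        ← Polynomial.eval_pow, Polynomial.eval_eq_sum_range' hdeg]
      simp only [Finset.mul_sum, Finset.sum_mul, Finset.sum_div]
      refine Finset.sum_congr rfl fun d hd => ?_
      -- the scalar identity
      have hm : t ^ (mExp p p₁ k j i l d) =
          t ^ (p * i + p₁ * l + p * d + (p - 1)) / t ^ (j * (p₁ + p * k)) := by
        rw [eq_div_iff (pow_ne_zero _ ht0), ← zpow_natCast t (p * i + p₁ * l + p * d + (p - 1)),
          ← zpow_natCast t (j * (p₁ + p * k)), ← zpow_add₀ ht0]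
        congr 1
        unfold mExp
        push_cast [Nat.cast_sub hp1]
        ring
      rw [hb, hm]
      field_simp
      rw [div_pow, div_pow]
      field_simp
      ring
    -- now compute the integral
    rw [circleIntegral.integral_congr (by norm_num) key]
    rw [circleIntegral_finset_sum _ _ (fun j hj =>
      circleIntegrable_finset_sum _ _ (fun i hi =>
        circleIntegrable_finset_sum _ _ (fun l hl =>
          circleIntegrable_finset_sum _ _ (fun d hd => circleIntegrable_monomial _ _))))]
    rw [Polynomial.eval_finset_sum]
    refine Finset.sum_congr rfl fun j hj => ?_
    rw [circleIntegral_finset_sum _ _ (fun i hi =>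
      circleIntegrable_finset_sum _ _ (fun l hl =>
        circleIntegrable_finset_sum _ _ (fun d hd => circleIntegrable_monomial _ _)))]
    rw [Polynomial.eval_finset_sum]
    refine Finset.sum_congr rfl fun i hi => ?_
    rw [circleIntegral_finset_sum _ _ (fun l hl =>
      circleIntegrable_finset_sum _ _ (fun d hd => circleIntegrable_monomial _ _))]
    rw [Polynomial.eval_finset_sum]
    refine Finset.sum_congr rfl fun l hl => ?_
    rw [circleIntegral_finset_sum _ _ (fun d hd => circleIntegrable_monomial _ _)]
    rw [Polynomial.eval_finset_sum]
    refine Finset.sum_congr rfl fun d hd => ?_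
    rw [circleIntegral.integral_const_mul, circleIntegral_zpow]
    have hlj : l ≤ j := by have := Finset.mem_range.1 hl; omega
    split_ifs with hm
    · -- matching term
      rw [Polynomial.eval_mul, Polynomial.eval_C, Polynomial.eval_pow, Polynomial.eval_X]
      have hE1 : 0 ≤ eExp q q₁ k j i l d := comb_nonneg hp hpq hlj hm
      have hc : (𝔠 ^ q₁) ^ (j - l) * 𝔠 ^ (j * (q * k)) / 𝔠 ^ (q * i + q * d + q) =
          𝔠 ^ (eExp q q₁ k j i l d).toNat := by
        rw [div_eq_iff (pow_ne_zero _ h𝔠), ← pow_mul, ← pow_add, ← pow_add]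
        congr 1
        have : (((eExp q q₁ k j i l d).toNat : ℤ)) = eExp q q₁ k j i l d :=
          Int.toNat_of_nonneg hE1
        have hgoal : ((q₁ * (j - l) + j * (q * k) : ℕ) : ℤ) =
            ((eExp q q₁ k j i l d).toNat : ℤ) + ((q * i + q * d + q : ℕ) : ℤ) := by
          rw [this]
          unfold eExp
          push_cast [Nat.cast_sub hlj]
          ring
        exact_mod_cast hgoal
      rw [hc]
      ring
    · simp
end

section
/- Let n ≥ 1 be an integer and let a_{ij} ∈ ℂ, for 1 ≤ j ≤ n and 0 ≤ i ≤ n − j, be arbitrary coefficients. Then there exists a polynomial 𝔭 ∈ ℂ[X] of degree at most ⌊(n+1)/3⌋ such that for every 𝔠 ∈ ℂ, the circle integral ∮_{|t−1|=1/2} Σ_{j=1}^{n} Σ_{i=0}^{n−j} a_{ij}·t^i·((𝔠 + 1 − t)/(1 − t)²)^j dt equals 𝔭(𝔠). -/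
open Finset Complex Polynomial

private lemma circleIntegrable_sum {ι : Type*} (s : Finset ι) (f : ι → ℂ → ℂ) (c : ℂ) (R : ℝ)
    (h : ∀ i ∈ s, CircleIntegrable (f i) c R) :
    CircleIntegrable (fun z => ∑ i ∈ s, f i z) c R := by
  classical
  induction s using Finset.cons_induction with
  | empty => simp only [Finset.sum_empty]; exact circleIntegrable_const (0 : ℂ) c R
  | cons a s ha ih =>
      simp only [Finset.sum_cons]
      exact (h a (Finset.mem_cons_self a s)).add (ih fun i hi => h i (Finset.mem_cons_of_mem hi))

private lemma circleIntegral_sum {ι : Type*} (s : Finset ι) (f : ι → ℂ → ℂ) (c : ℂ) (R : ℝ)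
    (h : ∀ i ∈ s, CircleIntegrable (f i) c R) :
    (∮ z in C(c, R), ∑ i ∈ s, f i z) = ∑ i ∈ s, ∮ z in C(c, R), f i z := by
  simp only [circleIntegral, Finset.smul_sum]
  exact intervalIntegral.integral_finset_sum fun i hi => (h i hi).out

private lemma atom_integrable (m : ℤ) (A : ℂ) :
    CircleIntegrable (fun z : ℂ => A * (z - 1) ^ m) 1 (1/2) := by
  have h : CircleIntegrable (fun z : ℂ => (z - 1) ^ m) 1 (1/2) := by
    rw [circleIntegrable_sub_zpow_iff]
    right; right
    rw [Metric.mem_sphere, dist_self, _root_.abs_of_nonneg (by norm_num : (0:ℝ) ≤ 1/2)]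
    norm_num
  have := h.out
  rw [circleIntegrable_iff] at *
  simpa only [smul_eq_mul, mul_left_comm] using this.const_mul A

private lemma atom_integral (m : ℤ) :
    (∮ z in C(1, 1/2), (z - 1) ^ m) = if m = -1 then 2 * Real.pi * I else 0 := by
  split_ifs with h
  · subst h
    have : ∀ z : ℂ, (z - 1) ^ (-1 : ℤ) = (z - 1)⁻¹ := fun z => zpow_neg_one _
    simp only [this]
    exact circleIntegral.integral_sub_inv_of_mem_ball (Metric.mem_ball_self (by norm_num))
  · exact circleIntegral.integral_sub_zpow_of_ne h _ _ _

/-- The Abelian integral for the normal form `ℋ(x,y) = y(1−x)² + (x−1)` of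
Broughton's polynomial is a polynomial in `𝔠` of degree at most `⌊(n+1)/3⌋`. -/
theorem stmt14 (n : ℕ) (hn : 1 ≤ n) (aij : ℕ → ℕ → ℂ) :
    ∃ 𝔭 : Polynomial ℂ, 𝔭.degree ≤ (((n + 1) / 3 : ℕ) : WithBot ℕ) ∧
      ∀ 𝔠 : ℂ,
        (∮ t in C(1, 1/2),
          ∑ j ∈ Finset.Icc 1 n, ∑ i ∈ Finset.range (n - j + 1),
            aij i j * t ^ i * ((𝔠 + 1 - t) / (1 - t) ^ 2) ^ j) = 𝔭.eval 𝔠 := by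
  classical
  refine ⟨∑ j ∈ Finset.Icc 1 n, ∑ i ∈ Finset.range (n - j + 1), ∑ p ∈ Finset.range (i + 1),
      ∑ q ∈ Finset.range (j + 1),
      Polynomial.C (aij i j * (i.choose p) * (j.choose q) * (-1) ^ q *
        (if ((p : ℤ) + q - 2 * j = -1) then 2 * Real.pi * I else 0)) * X ^ (j - q), ?_, ?_⟩
  · refine (Polynomial.degree_sum_le _ _).trans (Finset.sup_le fun j hj => ?_)
    refine (Polynomial.degree_sum_le _ _).trans (Finset.sup_le fun i hi => ?_)
    refine (Polynomial.degree_sum_le _ _).trans (Finset.sup_le fun p hp => ?_)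
    refine (Polynomial.degree_sum_le _ _).trans (Finset.sup_le fun q hq => ?_)
    by_cases h : ((p : ℤ) + q - 2 * j = -1)
    · refine (Polynomial.degree_C_mul_X_pow_le _ _).trans ?_
      have hj' := Finset.mem_Icc.mp hj
      have hi' := Finset.mem_range.mp hi
      have hp' := Finset.mem_range.mp hp
      have hq' := Finset.mem_range.mp hq
      exact_mod_cast Nat.cast_le.mpr (show j - q ≤ (n + 1) / 3 by omega)
    · simp [h]
  · intro 𝔠
    -- the integrand equals a sum of atoms on the sphere
    have key : ∀ t ∈ Metric.sphere (1 : ℂ) (1/2),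
        (∑ j ∈ Finset.Icc 1 n, ∑ i ∈ Finset.range (n - j + 1),
          aij i j * t ^ i * ((𝔠 + 1 - t) / (1 - t) ^ 2) ^ j)
        = ∑ j ∈ Finset.Icc 1 n, ∑ i ∈ Finset.range (n - j + 1), ∑ p ∈ Finset.range (i + 1),
            ∑ q ∈ Finset.range (j + 1),
            (aij i j * (i.choose p) * (j.choose q) * (-1) ^ q * 𝔠 ^ (j - q)) *
              (t - 1) ^ ((p : ℤ) + q - 2 * j) := by
      intro t ht
      have ht1 : t ≠ 1 := by
        intro h; rw [Metric.mem_sphere, h, dist_self] at ht; norm_num at ht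
      have hs : t - 1 ≠ 0 := sub_ne_zero.mpr ht1
      refine Finset.sum_congr rfl fun j hj => Finset.sum_congr rfl fun i hi => ?_
      have h1 : t ^ i = ∑ p ∈ Finset.range (i + 1), (i.choose p : ℂ) * (t - 1) ^ p := by
        conv_lhs => rw [show t = (t - 1) + 1 by ring]
        rw [add_pow]
        exact Finset.sum_congr rfl fun p hp => by ring
      have h2 : (𝔠 + 1 - t) ^ j = ∑ q ∈ Finset.range (j + 1),
          ((j.choose q : ℂ) * (-1) ^ q * 𝔠 ^ (j - q)) * (t - 1) ^ q := by
        conv_lhs => rw [show 𝔠 + 1 - t = (-(t - 1)) + 𝔠 by ring]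
        rw [add_pow]
        exact Finset.sum_congr rfl fun q hq => by rw [neg_pow]; ring
      have h3 : ((1 - t) ^ 2) ^ j = (t - 1) ^ (2 * j) := by
        rw [show (1 - t) ^ 2 = (t - 1) ^ 2 by ring, ← pow_mul, mul_comm]
      rw [div_pow, h3, h1, h2]
      simp only [Finset.mul_sum, Finset.sum_mul, Finset.sum_div]
      rw [Finset.sum_comm]
      refine Finset.sum_congr rfl fun p hp => ?_
      refine Finset.sum_congr rfl fun q hq => ?_
      have hz : (t - 1) ^ p * (t - 1) ^ q / (t - 1) ^ (2 * j)
          = (t - 1) ^ ((p : ℤ) + q - 2 * j) := by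
        rw [← zpow_natCast (t - 1) p, ← zpow_natCast (t - 1) q,
          ← zpow_natCast (t - 1) (2 * j), ← zpow_add₀ hs, ← zpow_sub₀ hs]
        push_cast
        ring_nf
      rw [← hz]
      ring
    rw [circleIntegral.integral_congr (by norm_num) key]
    have hint4 : ∀ (j i p : ℕ), ∀ q ∈ Finset.range (j + 1), CircleIntegrable
        (fun t => (aij i j * (i.choose p) * (j.choose q) * (-1) ^ q * 𝔠 ^ (j - q)) *
          (t - 1) ^ ((p : ℤ) + q - 2 * j)) 1 (1/2) := fun j i p q _ => atom_integrable _ _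
    have hint3 : ∀ (j i : ℕ), ∀ p ∈ Finset.range (i + 1), CircleIntegrable
        (fun t => ∑ q ∈ Finset.range (j + 1),
          (aij i j * (i.choose p) * (j.choose q) * (-1) ^ q * 𝔠 ^ (j - q)) *
          (t - 1) ^ ((p : ℤ) + q - 2 * j)) 1 (1/2) :=
      fun j i p _ => circleIntegrable_sum _ _ _ _ (hint4 j i p)
    have hint2 : ∀ (j : ℕ), ∀ i ∈ Finset.range (n - j + 1), CircleIntegrable
        (fun t => ∑ p ∈ Finset.range (i + 1), ∑ q ∈ Finset.range (j + 1),
          (aij i j * (i.choose p) * (j.choose q) * (-1) ^ q * 𝔠 ^ (j - q)) *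
          (t - 1) ^ ((p : ℤ) + q - 2 * j)) 1 (1/2) :=
      fun j i _ => circleIntegrable_sum _ _ _ _ (hint3 j i)
    have hint1 : ∀ j ∈ Finset.Icc 1 n, CircleIntegrable
        (fun t => ∑ i ∈ Finset.range (n - j + 1), ∑ p ∈ Finset.range (i + 1),
          ∑ q ∈ Finset.range (j + 1),
          (aij i j * (i.choose p) * (j.choose q) * (-1) ^ q * 𝔠 ^ (j - q)) *
          (t - 1) ^ ((p : ℤ) + q - 2 * j)) 1 (1/2) :=
      fun j _ => circleIntegrable_sum _ _ _ _ (hint2 j)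
    rw [circleIntegral_sum _ _ _ _ hint1]
    rw [Polynomial.eval_finset_sum]
    refine Finset.sum_congr rfl fun j hj => ?_
    rw [circleIntegral_sum _ _ _ _ (hint2 j), Polynomial.eval_finset_sum]
    refine Finset.sum_congr rfl fun i hi => ?_
    rw [circleIntegral_sum _ _ _ _ (hint3 j i), Polynomial.eval_finset_sum]
    refine Finset.sum_congr rfl fun p hp => ?_
    rw [circleIntegral_sum _ _ _ _ (hint4 j i p), Polynomial.eval_finset_sum]
    refine Finset.sum_congr rfl fun q hq => ?_
    rw [circleIntegral.integral_const_mul, atom_integral]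
    simp only [Polynomial.eval_mul, Polynomial.eval_C, Polynomial.eval_pow, Polynomial.eval_X]
    ring
end

section
/- For 𝔠 ≠ 0 and t ∉ {0, 1}, set x(t,𝔠) = t(1−t)²/𝔠², y(t,𝔠) = 𝔠²(𝔠 + 1 − t)/(t(1−t)³), and F(t,𝔠) = y(t,𝔠)·( y(t,𝔠)² − 108·x(t,𝔠)·y(t,𝔠) − 66 )·(1−t)(1−3t)/𝔠². Then for every 𝔠 ∈ ℂ with 𝔠 ≠ 0: ∮_{|t|=1/2} F(t,𝔠) dt = 3·(2π√(−1))·(𝔠 + 1)·(4𝔠⁶ + 3𝔠⁵ − 36𝔠 − 58) and ∮_{|t−1|=1/2} F(t,𝔠) dt = −3·(2π√(−1))·(𝔠 − 1)(𝔠 + 2)·(4𝔠⁵ + 3𝔠⁴ + 8𝔠³ − 2𝔠² + 18𝔠 − 58). -/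
open Metric Real Complex

lemma term_integrable {c w : ℂ} {R : ℝ} (hw : w ∉ sphere c |R|) (a : ℂ) (k : ℕ) :
    CircleIntegrable (fun t => a * ((t - w) ^ k)⁻¹) c R := by
  have h : CircleIntegrable (fun t => (t - w) ^ (-(k:ℤ))) c R :=
    circleIntegrable_sub_zpow_iff.mpr (Or.inr (Or.inr hw))
  have h2 : CircleIntegrable (fun t => a * (t - w) ^ (-(k:ℤ))) c R :=
    IntervalIntegrable.const_mul h a
  simpa [zpow_neg, zpow_natCast] using h2

lemma term_zero (a w c : ℂ) (R : ℝ) (k : ℕ) (hk : 2 ≤ k) :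
    (∮ t in C(c, R), a * ((t - w) ^ k)⁻¹) = 0 := by
  have h : (∮ t in C(c, R), (t - w) ^ (-(k:ℤ))) = 0 :=
    circleIntegral.integral_sub_zpow_of_ne (by omega) c w R
  have := circleIntegral.integral_const_mul a (fun t => (t - w) ^ (-(k:ℤ))) c R
  rw [h, mul_zero] at this
  simpa [zpow_neg, zpow_natCast] using this

lemma inv_inside (a : ℂ) {c w : ℂ} {R : ℝ} (hw : w ∈ ball c R) :
    (∮ t in C(c, R), a * (t - w)⁻¹) = a * (2 * π * I) := by
  rw [circleIntegral.integral_const_mul, circleIntegral.integral_sub_inv_of_mem_ball hw]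

lemma inv_outside (a : ℂ) {c w : ℂ} {R : ℝ} (hR : 0 ≤ R) (hw : w ∉ closedBall c R) :
    (∮ t in C(c, R), a * (t - w)⁻¹) = 0 := by
  rw [circleIntegral.integral_const_mul]
  have h0 : (∮ t in C(c, R), (t - w)⁻¹) = 0 := by
    apply Complex.circleIntegral_eq_zero_of_differentiable_on_off_countable hR
      Set.countable_empty
    · intro z hz
      have hne : z - w ≠ 0 := sub_ne_zero.2 (fun h => hw (h ▸ hz))
      exact ((continuousAt_id.sub continuousAt_const).inv₀ hne).continuousWithinAt
    · intro z hz
      have hzb : z ∈ closedBall c R := ball_subset_closedBall hz.1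
      have hne : z - w ≠ 0 := sub_ne_zero.2 (fun h => hw (h ▸ hzb))
      exact (differentiableAt_id.sub_const w).inv hne
  rw [h0, mul_zero]

private lemma cIa {f g : ℂ → ℂ} {c : ℂ} {R : ℝ} (hf : CircleIntegrable f c R)
    (hg : CircleIntegrable g c R) :
    (∮ z in C(c, R), f z + g z) = (∮ z in C(c, R), f z) + ∮ z in C(c, R), g z := by
  simp only [circleIntegral, smul_add, intervalIntegral.integral_add hf.out hg.out]

lemma split11 {c : ℂ} {R : ℝ} (f₁ f₂ f₃ f₄ f₅ f₆ f₇ f₈ f₉ f₁₀ f₁₁ : ℂ → ℂ)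
    (h₁ : CircleIntegrable f₁ c R) (h₂ : CircleIntegrable f₂ c R)
    (h₃ : CircleIntegrable f₃ c R) (h₄ : CircleIntegrable f₄ c R)
    (h₅ : CircleIntegrable f₅ c R) (h₆ : CircleIntegrable f₆ c R)
    (h₇ : CircleIntegrable f₇ c R) (h₈ : CircleIntegrable f₈ c R)
    (h₉ : CircleIntegrable f₉ c R) (h₁₀ : CircleIntegrable f₁₀ c R)
    (h₁₁ : CircleIntegrable f₁₁ c R) :
    (∮ t in C(c, R), (f₁ t + f₂ t + f₃ t + f₄ t + f₅ t + f₆ t + f₇ t + f₈ t + f₉ t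
        + f₁₀ t + f₁₁ t))
      = (∮ t in C(c, R), f₁ t) + (∮ t in C(c, R), f₂ t) + (∮ t in C(c, R), f₃ t)
        + (∮ t in C(c, R), f₄ t) + (∮ t in C(c, R), f₅ t) + (∮ t in C(c, R), f₆ t)
        + (∮ t in C(c, R), f₇ t) + (∮ t in C(c, R), f₈ t) + (∮ t in C(c, R), f₉ t)
        + (∮ t in C(c, R), f₁₀ t) + (∮ t in C(c, R), f₁₁ t) := by
  have H2 : CircleIntegrable (fun t => f₁ t + f₂ t) c R := h₁.add h₂
  have H3 : CircleIntegrable (fun t => f₁ t + f₂ t + f₃ t) c R := H2.add h₃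
  have H4 : CircleIntegrable (fun t => f₁ t + f₂ t + f₃ t + f₄ t) c R := H3.add h₄
  have H5 : CircleIntegrable (fun t => f₁ t + f₂ t + f₃ t + f₄ t + f₅ t) c R := H4.add h₅
  have H6 : CircleIntegrable (fun t => f₁ t + f₂ t + f₃ t + f₄ t + f₅ t + f₆ t) c R := H5.add h₆
  have H7 : CircleIntegrable (fun t => f₁ t + f₂ t + f₃ t + f₄ t + f₅ t + f₆ t + f₇ t) c R :=
    H6.add h₇
  have H8 : CircleIntegrable
      (fun t => f₁ t + f₂ t + f₃ t + f₄ t + f₅ t + f₆ t + f₇ t + f₈ t) c R := H7.add h₈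
  have H9 : CircleIntegrable
      (fun t => f₁ t + f₂ t + f₃ t + f₄ t + f₅ t + f₆ t + f₇ t + f₈ t + f₉ t) c R := H8.add h₉
  have H10 : CircleIntegrable
      (fun t => f₁ t + f₂ t + f₃ t + f₄ t + f₅ t + f₆ t + f₇ t + f₈ t + f₉ t + f₁₀ t) c R :=
    H9.add h₁₀
  rw [cIa H10 h₁₁, cIa H9 h₁₀, cIa H8 h₉, cIa H7 h₈, cIa H6 h₇, cIa H5 h₆, cIa H4 h₅,
    cIa H3 h₄, cIa H2 h₃, cIa h₁ h₂]

lemma eval_zero (a₁ a₂ a₃ b₁ b₂ b₃ b₄ b₅ b₆ b₇ b₈ : ℂ) :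
    (∮ t in C((0:ℂ), (1/2:ℝ)), (a₁ * (t - 0)⁻¹ + a₂ * ((t - 0) ^ 2)⁻¹ + a₃ * ((t - 0) ^ 3)⁻¹
        + b₁ * (t - 1)⁻¹ + b₂ * ((t - 1) ^ 2)⁻¹ + b₃ * ((t - 1) ^ 3)⁻¹ + b₄ * ((t - 1) ^ 4)⁻¹
        + b₅ * ((t - 1) ^ 5)⁻¹ + b₆ * ((t - 1) ^ 6)⁻¹ + b₇ * ((t - 1) ^ 7)⁻¹
        + b₈ * ((t - 1) ^ 8)⁻¹))
      = a₁ * (2 * π * I) := by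
  have habs : |(1/2:ℝ)| = 1/2 := abs_of_pos (by norm_num)
  have h0s : (0:ℂ) ∉ sphere (0:ℂ) |(1/2:ℝ)| := by
    rw [habs]; norm_num [mem_sphere, Complex.dist_eq]
  have h1s : (1:ℂ) ∉ sphere (0:ℂ) |(1/2:ℝ)| := by
    rw [habs]; norm_num [mem_sphere, Complex.dist_eq]
  have h0b : (0:ℂ) ∈ ball (0:ℂ) (1/2:ℝ) := mem_ball_self (by norm_num)
  have h1b : (1:ℂ) ∉ closedBall (0:ℂ) (1/2:ℝ) := by
    simp [Complex.dist_eq]; norm_num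
  have e := split11 (c := (0:ℂ)) (R := (1/2:ℝ))
    (fun t => a₁ * (t - 0)⁻¹) (fun t => a₂ * ((t - 0) ^ 2)⁻¹) (fun t => a₃ * ((t - 0) ^ 3)⁻¹)
    (fun t => b₁ * (t - 1)⁻¹) (fun t => b₂ * ((t - 1) ^ 2)⁻¹) (fun t => b₃ * ((t - 1) ^ 3)⁻¹)
    (fun t => b₄ * ((t - 1) ^ 4)⁻¹) (fun t => b₅ * ((t - 1) ^ 5)⁻¹) (fun t => b₆ * ((t - 1) ^ 6)⁻¹)
    (fun t => b₇ * ((t - 1) ^ 7)⁻¹) (fun t => b₈ * ((t - 1) ^ 8)⁻¹)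
    (by simpa using term_integrable h0s a₁ 1) (term_integrable h0s a₂ 2) (term_integrable h0s a₃ 3)
    (by simpa using term_integrable h1s b₁ 1) (term_integrable h1s b₂ 2) (term_integrable h1s b₃ 3)
    (term_integrable h1s b₄ 4) (term_integrable h1s b₅ 5) (term_integrable h1s b₆ 6)
    (term_integrable h1s b₇ 7) (term_integrable h1s b₈ 8)
  rw [e, inv_inside a₁ h0b, inv_outside b₁ (by norm_num) h1b,
    term_zero a₂ 0 0 (1/2) 2 (by norm_num), term_zero a₃ 0 0 (1/2) 3 (by norm_num),
    term_zero b₂ 1 0 (1/2) 2 (by norm_num), term_zero b₃ 1 0 (1/2) 3 (by norm_num),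
    term_zero b₄ 1 0 (1/2) 4 (by norm_num), term_zero b₅ 1 0 (1/2) 5 (by norm_num),
    term_zero b₆ 1 0 (1/2) 6 (by norm_num), term_zero b₇ 1 0 (1/2) 7 (by norm_num),
    term_zero b₈ 1 0 (1/2) 8 (by norm_num)]
  ring

lemma eval_one (a₁ a₂ a₃ b₁ b₂ b₃ b₄ b₅ b₆ b₇ b₈ : ℂ) :
    (∮ t in C((1:ℂ), (1/2:ℝ)), (a₁ * (t - 0)⁻¹ + a₂ * ((t - 0) ^ 2)⁻¹ + a₃ * ((t - 0) ^ 3)⁻¹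
        + b₁ * (t - 1)⁻¹ + b₂ * ((t - 1) ^ 2)⁻¹ + b₃ * ((t - 1) ^ 3)⁻¹ + b₄ * ((t - 1) ^ 4)⁻¹
        + b₅ * ((t - 1) ^ 5)⁻¹ + b₆ * ((t - 1) ^ 6)⁻¹ + b₇ * ((t - 1) ^ 7)⁻¹
        + b₈ * ((t - 1) ^ 8)⁻¹))
      = b₁ * (2 * π * I) := by
  have habs : |(1/2:ℝ)| = 1/2 := abs_of_pos (by norm_num)
  have h0s : (0:ℂ) ∉ sphere (1:ℂ) |(1/2:ℝ)| := by
    rw [habs]; norm_num [mem_sphere, Complex.dist_eq]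
  have h1s : (1:ℂ) ∉ sphere (1:ℂ) |(1/2:ℝ)| := by
    rw [habs]; norm_num [mem_sphere, Complex.dist_eq]
  have h1b : (1:ℂ) ∈ ball (1:ℂ) (1/2:ℝ) := mem_ball_self (by norm_num)
  have h0b : (0:ℂ) ∉ closedBall (1:ℂ) (1/2:ℝ) := by
    simp [Complex.dist_eq]; norm_num
  have e := split11 (c := (1:ℂ)) (R := (1/2:ℝ))
    (fun t => a₁ * (t - 0)⁻¹) (fun t => a₂ * ((t - 0) ^ 2)⁻¹) (fun t => a₃ * ((t - 0) ^ 3)⁻¹)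
    (fun t => b₁ * (t - 1)⁻¹) (fun t => b₂ * ((t - 1) ^ 2)⁻¹) (fun t => b₃ * ((t - 1) ^ 3)⁻¹)
    (fun t => b₄ * ((t - 1) ^ 4)⁻¹) (fun t => b₅ * ((t - 1) ^ 5)⁻¹) (fun t => b₆ * ((t - 1) ^ 6)⁻¹)
    (fun t => b₇ * ((t - 1) ^ 7)⁻¹) (fun t => b₈ * ((t - 1) ^ 8)⁻¹)
    (by simpa using term_integrable h0s a₁ 1) (term_integrable h0s a₂ 2) (term_integrable h0s a₃ 3)
    (by simpa using term_integrable h1s b₁ 1) (term_integrable h1s b₂ 2) (term_integrable h1s b₃ 3)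
    (term_integrable h1s b₄ 4) (term_integrable h1s b₅ 5) (term_integrable h1s b₆ 6)
    (term_integrable h1s b₇ 7) (term_integrable h1s b₈ 8)
  rw [e, inv_inside b₁ h1b, inv_outside a₁ (by norm_num) h0b,
    term_zero a₂ 0 1 (1/2) 2 (by norm_num), term_zero a₃ 0 1 (1/2) 3 (by norm_num),
    term_zero b₂ 1 1 (1/2) 2 (by norm_num), term_zero b₃ 1 1 (1/2) 3 (by norm_num),
    term_zero b₄ 1 1 (1/2) 4 (by norm_num), term_zero b₅ 1 1 (1/2) 5 (by norm_num),
    term_zero b₆ 1 1 (1/2) 6 (by norm_num), term_zero b₇ 1 1 (1/2) 7 (by norm_num),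
    term_zero b₈ 1 1 (1/2) 8 (by norm_num)]
  ring

lemma conv01 (a t : ℂ) (ht0 : t ≠ 0) (ht1' : t - 1 ≠ 0) :
    a * (t - 0)⁻¹ = (a * t ^ 2 * (t - 1) ^ 8) / (t ^ 3 * (t - 1) ^ 8) := by
  field_simp
  ring

lemma conv02 (a t : ℂ) (ht0 : t ≠ 0) (ht1' : t - 1 ≠ 0) :
    a * ((t - 0) ^ 2)⁻¹ = (a * t * (t - 1) ^ 8) / (t ^ 3 * (t - 1) ^ 8) := by
  field_simp
  ring

lemma conv03 (a t : ℂ) (ht0 : t ≠ 0) (ht1' : t - 1 ≠ 0) :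
    a * ((t - 0) ^ 3)⁻¹ = (a * (t - 1) ^ 8) / (t ^ 3 * (t - 1) ^ 8) := by
  field_simp
  ring

lemma conv11 (a t : ℂ) (ht0 : t ≠ 0) (ht1' : t - 1 ≠ 0) :
    a * (t - 1)⁻¹ = (a * t ^ 3 * (t - 1) ^ 7) / (t ^ 3 * (t - 1) ^ 8) := by
  field_simp

lemma conv12 (a t : ℂ) (ht0 : t ≠ 0) (ht1' : t - 1 ≠ 0) :
    a * ((t - 1) ^ 2)⁻¹ = (a * t ^ 3 * (t - 1) ^ 6) / (t ^ 3 * (t - 1) ^ 8) := by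
  field_simp

lemma conv13 (a t : ℂ) (ht0 : t ≠ 0) (ht1' : t - 1 ≠ 0) :
    a * ((t - 1) ^ 3)⁻¹ = (a * t ^ 3 * (t - 1) ^ 5) / (t ^ 3 * (t - 1) ^ 8) := by
  field_simp

lemma conv14 (a t : ℂ) (ht0 : t ≠ 0) (ht1' : t - 1 ≠ 0) :
    a * ((t - 1) ^ 4)⁻¹ = (a * t ^ 3 * (t - 1) ^ 4) / (t ^ 3 * (t - 1) ^ 8) := by
  field_simp

lemma conv15 (a t : ℂ) (ht0 : t ≠ 0) (ht1' : t - 1 ≠ 0) :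
    a * ((t - 1) ^ 5)⁻¹ = (a * t ^ 3 * (t - 1) ^ 3) / (t ^ 3 * (t - 1) ^ 8) := by
  field_simp

lemma conv16 (a t : ℂ) (ht0 : t ≠ 0) (ht1' : t - 1 ≠ 0) :
    a * ((t - 1) ^ 6)⁻¹ = (a * t ^ 3 * (t - 1) ^ 2) / (t ^ 3 * (t - 1) ^ 8) := by
  field_simp

lemma conv17 (a t : ℂ) (ht0 : t ≠ 0) (ht1' : t - 1 ≠ 0) :
    a * ((t - 1) ^ 7)⁻¹ = (a * t ^ 3 * (t - 1) ^ 1) / (t ^ 3 * (t - 1) ^ 8) := by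
  field_simp

lemma conv18 (a t : ℂ) (ht0 : t ≠ 0) (ht1' : t - 1 ≠ 0) :
    a * ((t - 1) ^ 8)⁻¹ = (a * t ^ 3) / (t ^ 3 * (t - 1) ^ 8) := by
  field_simp

set_option maxHeartbeats 1000000 in
lemma aux_key (𝔠 t : ℂ) (h𝔠 : 𝔠 ≠ 0) (ht0 : t ≠ 0) (ht1 : t ≠ 1) :
    (𝔠 ^ 2 * (𝔠 + 1 - t) / (t * (1 - t) ^ 3)) * ((𝔠 ^ 2 * (𝔠 + 1 - t) / (t * (1 - t) ^ 3)) ^ 2 - 108 * (t * (1 - t) ^ 2 / 𝔠 ^ 2) * (𝔠 ^ 2 * (𝔠 + 1 - t) / (t * (1 - t) ^ 3)) - 66) * (1 - t) * (1 - 3 * t) / 𝔠 ^ 2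
      = (12*𝔠^7 + 21*𝔠^6 + 9*𝔠^5 - 108*𝔠^2 - 282*𝔠 - 174) * (t - 0)⁻¹
      + (5*𝔠^7 + 12*𝔠^6 + 9*𝔠^5 + 2*𝔠^4) * ((t - 0) ^ 2)⁻¹
      + (𝔠^7 + 3*𝔠^6 + 3*𝔠^5 + 𝔠^4) * ((t - 0) ^ 3)⁻¹
      + (-12*𝔠^7 - 21*𝔠^6 - 9*𝔠^5 + 108*𝔠^2 + 282*𝔠 - 348) * (t - 1)⁻¹
      + (7*𝔠^7 + 9*𝔠^6 - 2*𝔠^4 - 108*𝔠^2 + 564*𝔠) * ((t - 1) ^ 2)⁻¹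
      + (-3*𝔠^7 + 6*𝔠^5 + 3*𝔠^4 - 216*𝔠^2) * ((t - 1) ^ 3)⁻¹
      + (-6*𝔠^6 - 9*𝔠^5 - 3*𝔠^4) * ((t - 1) ^ 4)⁻¹
      + (2*𝔠^7 + 9*𝔠^6 + 9*𝔠^5 + 2*𝔠^4) * ((t - 1) ^ 5)⁻¹
      + (-3*𝔠^7 - 9*𝔠^6 - 6*𝔠^5) * ((t - 1) ^ 6)⁻¹
      + (3*𝔠^7 + 6*𝔠^6) * ((t - 1) ^ 7)⁻¹
      + (-2*𝔠^7) * ((t - 1) ^ 8)⁻¹ := by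
  have h1t : (1:ℂ) - t ≠ 0 := sub_ne_zero.2 (Ne.symm ht1)
  have ht1' : t - 1 ≠ 0 := sub_ne_zero.2 ht1
  have hD : t ^ 3 * (t - 1) ^ 8 ≠ 0 := mul_ne_zero (pow_ne_zero _ ht0) (pow_ne_zero _ ht1')
  have hxy : 108 * (t * (1 - t) ^ 2 / 𝔠 ^ 2) * (𝔠 ^ 2 * (𝔠 + 1 - t) / (t * (1 - t) ^ 3)) = 108 * ((𝔠 + 1 - t) / (1 - t)) := by
    field_simp
  have h1c : (1 - t) * (1 - t)⁻¹ = (1:ℂ) := mul_inv_cancel₀ h1t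
  have hsplit : (𝔠 ^ 2 * (𝔠 + 1 - t) / (t * (1 - t) ^ 3)) * ((𝔠 ^ 2 * (𝔠 + 1 - t) / (t * (1 - t) ^ 3)) ^ 2 - 108 * (t * (1 - t) ^ 2 / 𝔠 ^ 2) * (𝔠 ^ 2 * (𝔠 + 1 - t) / (t * (1 - t) ^ 3)) - 66) * (1 - t) * (1 - 3 * t) / 𝔠 ^ 2
      = (𝔠 ^ 2 * (𝔠 + 1 - t) / (t * (1 - t) ^ 3)) ^ 3 * (1 - t) * (1 - 3*t) / 𝔠 ^ 2
        - 108 * (𝔠 + 1 - t) * (𝔠 ^ 2 * (𝔠 + 1 - t) / (t * (1 - t) ^ 3)) * (1 - 3*t) / 𝔠 ^ 2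
        - 66 * (𝔠 ^ 2 * (𝔠 + 1 - t) / (t * (1 - t) ^ 3)) * (1 - t) * (1 - 3*t) / 𝔠 ^ 2 := by
    linear_combination (-(𝔠 ^ 2 * (𝔠 + 1 - t) / (t * (1 - t) ^ 3)) * (1-t) * (1-3*t) / 𝔠^2) * hxy
      + (-(108:ℂ)*(𝔠+1-t)*(𝔠 ^ 2 * (𝔠 + 1 - t) / (t * (1 - t) ^ 3))*(1-3*t)/𝔠^2) * h1c
  have hT1 : (𝔠 ^ 2 * (𝔠 + 1 - t) / (t * (1 - t) ^ 3)) ^ 3 * (1 - t) * (1 - 3*t) / 𝔠 ^ 2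
      = 𝔠^4*(𝔠+1-t)^3*(1-3*t) / (t ^ 3 * (t - 1) ^ 8) := by
    field_simp
    ring
  have hT2 : 108 * (𝔠 + 1 - t) * (𝔠 ^ 2 * (𝔠 + 1 - t) / (t * (1 - t) ^ 3)) * (1 - 3*t) / 𝔠 ^ 2
      = (-108)*(𝔠+1-t)^2*(1-3*t)*t^2*(t-1)^5 / (t ^ 3 * (t - 1) ^ 8) := by
    field_simp
    ring
  have hT3 : 66 * (𝔠 ^ 2 * (𝔠 + 1 - t) / (t * (1 - t) ^ 3)) * (1 - t) * (1 - 3*t) / 𝔠 ^ 2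
      = 66*(𝔠+1-t)*(1-3*t)*t^2*(t-1)^6 / (t ^ 3 * (t - 1) ^ 8) := by
    field_simp
    ring
  rw [hsplit, hT1, hT2, hT3, div_sub_div_same, div_sub_div_same,
    conv01 (12*𝔠^7 + 21*𝔠^6 + 9*𝔠^5 - 108*𝔠^2 - 282*𝔠 - 174) t ht0 ht1', conv02 (5*𝔠^7 + 12*𝔠^6 + 9*𝔠^5 + 2*𝔠^4) t ht0 ht1',
    conv03 (𝔠^7 + 3*𝔠^6 + 3*𝔠^5 + 𝔠^4) t ht0 ht1', conv11 (-12*𝔠^7 - 21*𝔠^6 - 9*𝔠^5 + 108*𝔠^2 + 282*𝔠 - 348) t ht0 ht1',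
    conv12 (7*𝔠^7 + 9*𝔠^6 - 2*𝔠^4 - 108*𝔠^2 + 564*𝔠) t ht0 ht1', conv13 (-3*𝔠^7 + 6*𝔠^5 + 3*𝔠^4 - 216*𝔠^2) t ht0 ht1',
    conv14 (-6*𝔠^6 - 9*𝔠^5 - 3*𝔠^4) t ht0 ht1', conv15 (2*𝔠^7 + 9*𝔠^6 + 9*𝔠^5 + 2*𝔠^4) t ht0 ht1',
    conv16 (-3*𝔠^7 - 9*𝔠^6 - 6*𝔠^5) t ht0 ht1', conv17 (3*𝔠^7 + 6*𝔠^6) t ht0 ht1',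
    conv18 (-2*𝔠^7) t ht0 ht1']
  simp only [← add_div]
  rw [div_eq_div_iff hD hD]
  ring

/-- Explicit Abelian integrals of the 1-form `ϑ₀ = y(y² − 108xy − 66) dx` for
the normal form `ℋ(x,y) = (xy−1)(1−x(xy−1)²)` of family 𝔉₂, over the canonical
cycles around the punctures `t = 0` and `t = 1`. -/
theorem stmt17 (xx yy F : ℂ → ℂ → ℂ)
    (hxx : ∀ t 𝔠, xx t 𝔠 = t * (1 - t) ^ 2 / 𝔠 ^ 2)
    (hyy : ∀ t 𝔠, yy t 𝔠 = 𝔠 ^ 2 * (𝔠 + 1 - t) / (t * (1 - t) ^ 3))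
    (hF : ∀ t 𝔠, F t 𝔠 = yy t 𝔠 *
        ((yy t 𝔠) ^ 2 - 108 * (xx t 𝔠) * (yy t 𝔠) - 66) *
        (1 - t) * (1 - 3 * t) / 𝔠 ^ 2) :
    ∀ 𝔠 : ℂ, 𝔠 ≠ 0 →
      (∮ t in C(0, 1/2), F t 𝔠)
        = 3 * (2 * Real.pi * Complex.I) * (𝔠 + 1) *
          (4 * 𝔠 ^ 6 + 3 * 𝔠 ^ 5 - 36 * 𝔠 - 58) ∧
      (∮ t in C(1, 1/2), F t 𝔠)
        = -(3 * (2 * Real.pi * Complex.I)) * (𝔠 - 1) * (𝔠 + 2) *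
          (4 * 𝔠 ^ 5 + 3 * 𝔠 ^ 4 + 8 * 𝔠 ^ 3 - 2 * 𝔠 ^ 2 + 18 * 𝔠 - 58) := by
  intro 𝔠 h𝔠
  have key : ∀ t : ℂ, t ≠ 0 → t ≠ 1 → F t 𝔠 =
      (12*𝔠^7 + 21*𝔠^6 + 9*𝔠^5 - 108*𝔠^2 - 282*𝔠 - 174) * (t - 0)⁻¹
      + (5*𝔠^7 + 12*𝔠^6 + 9*𝔠^5 + 2*𝔠^4) * ((t - 0) ^ 2)⁻¹
      + (𝔠^7 + 3*𝔠^6 + 3*𝔠^5 + 𝔠^4) * ((t - 0) ^ 3)⁻¹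
      + (-12*𝔠^7 - 21*𝔠^6 - 9*𝔠^5 + 108*𝔠^2 + 282*𝔠 - 348) * (t - 1)⁻¹
      + (7*𝔠^7 + 9*𝔠^6 - 2*𝔠^4 - 108*𝔠^2 + 564*𝔠) * ((t - 1) ^ 2)⁻¹
      + (-3*𝔠^7 + 6*𝔠^5 + 3*𝔠^4 - 216*𝔠^2) * ((t - 1) ^ 3)⁻¹
      + (-6*𝔠^6 - 9*𝔠^5 - 3*𝔠^4) * ((t - 1) ^ 4)⁻¹
      + (2*𝔠^7 + 9*𝔠^6 + 9*𝔠^5 + 2*𝔠^4) * ((t - 1) ^ 5)⁻¹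
      + (-3*𝔠^7 - 9*𝔠^6 - 6*𝔠^5) * ((t - 1) ^ 6)⁻¹
      + (3*𝔠^7 + 6*𝔠^6) * ((t - 1) ^ 7)⁻¹
      + (-2*𝔠^7) * ((t - 1) ^ 8)⁻¹ := by
    intro t ht0 ht1
    rw [hF, hyy, hxx]
    exact aux_key 𝔠 t h𝔠 ht0 ht1
  constructor
  · have hEq : Set.EqOn (fun t => F t 𝔠)
        (fun t =>
          (12*𝔠^7 + 21*𝔠^6 + 9*𝔠^5 - 108*𝔠^2 - 282*𝔠 - 174) * (t - 0)⁻¹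
          + (5*𝔠^7 + 12*𝔠^6 + 9*𝔠^5 + 2*𝔠^4) * ((t - 0) ^ 2)⁻¹
          + (𝔠^7 + 3*𝔠^6 + 3*𝔠^5 + 𝔠^4) * ((t - 0) ^ 3)⁻¹
          + (-12*𝔠^7 - 21*𝔠^6 - 9*𝔠^5 + 108*𝔠^2 + 282*𝔠 - 348) * (t - 1)⁻¹
          + (7*𝔠^7 + 9*𝔠^6 - 2*𝔠^4 - 108*𝔠^2 + 564*𝔠) * ((t - 1) ^ 2)⁻¹
          + (-3*𝔠^7 + 6*𝔠^5 + 3*𝔠^4 - 216*𝔠^2) * ((t - 1) ^ 3)⁻¹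
          + (-6*𝔠^6 - 9*𝔠^5 - 3*𝔠^4) * ((t - 1) ^ 4)⁻¹
          + (2*𝔠^7 + 9*𝔠^6 + 9*𝔠^5 + 2*𝔠^4) * ((t - 1) ^ 5)⁻¹
          + (-3*𝔠^7 - 9*𝔠^6 - 6*𝔠^5) * ((t - 1) ^ 6)⁻¹
          + (3*𝔠^7 + 6*𝔠^6) * ((t - 1) ^ 7)⁻¹
          + (-2*𝔠^7) * ((t - 1) ^ 8)⁻¹)
        (sphere (0:ℂ) (1/2:ℝ)) := by
      intro t ht
      have ht0 : t ≠ 0 := by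
        rintro rfl
        simp [mem_sphere, Complex.dist_eq] at ht
      have ht1 : t ≠ 1 := by
        rintro rfl
        simp [mem_sphere, Complex.dist_eq] at ht
      exact key t ht0 ht1
    rw [circleIntegral.integral_congr (by norm_num) hEq, eval_zero]
    ring
  · have hEq : Set.EqOn (fun t => F t 𝔠)
        (fun t =>
          (12*𝔠^7 + 21*𝔠^6 + 9*𝔠^5 - 108*𝔠^2 - 282*𝔠 - 174) * (t - 0)⁻¹
          + (5*𝔠^7 + 12*𝔠^6 + 9*𝔠^5 + 2*𝔠^4) * ((t - 0) ^ 2)⁻¹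
          + (𝔠^7 + 3*𝔠^6 + 3*𝔠^5 + 𝔠^4) * ((t - 0) ^ 3)⁻¹
          + (-12*𝔠^7 - 21*𝔠^6 - 9*𝔠^5 + 108*𝔠^2 + 282*𝔠 - 348) * (t - 1)⁻¹
          + (7*𝔠^7 + 9*𝔠^6 - 2*𝔠^4 - 108*𝔠^2 + 564*𝔠) * ((t - 1) ^ 2)⁻¹
          + (-3*𝔠^7 + 6*𝔠^5 + 3*𝔠^4 - 216*𝔠^2) * ((t - 1) ^ 3)⁻¹
          + (-6*𝔠^6 - 9*𝔠^5 - 3*𝔠^4) * ((t - 1) ^ 4)⁻¹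
          + (2*𝔠^7 + 9*𝔠^6 + 9*𝔠^5 + 2*𝔠^4) * ((t - 1) ^ 5)⁻¹
          + (-3*𝔠^7 - 9*𝔠^6 - 6*𝔠^5) * ((t - 1) ^ 6)⁻¹
          + (3*𝔠^7 + 6*𝔠^6) * ((t - 1) ^ 7)⁻¹
          + (-2*𝔠^7) * ((t - 1) ^ 8)⁻¹)
        (sphere (1:ℂ) (1/2:ℝ)) := by
      intro t ht
      have ht0 : t ≠ 0 := by
        rintro rfl
        simp [mem_sphere, Complex.dist_eq] at ht
      have ht1 : t ≠ 1 := by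
        rintro rfl
        simp [mem_sphere, Complex.dist_eq] at ht
      exact key t ht0 ht1
    rw [circleIntegral.integral_congr (by norm_num) hEq, eval_one]
    ring
end

section
/- Let ℋ(x,y) = x(xy − 1)² + (xy − 1)(1 − x(xy − 1)²) and 𝒢(x,y) = x(xy − 1)². For (t,𝔠) ∈ ℂ² with t·(1 − t)·(𝔠 − t) ≠ 0 set x(t,𝔠) = t(1−t)²/(𝔠−t)² and y(t,𝔠) = (𝔠 + 1 − 2t)(𝔠 − t)²/(t(1−t)³). Then 𝒢(x(t,𝔠), y(t,𝔠)) = t and ℋ(x(t,𝔠), y(t,𝔠)) = 𝔠 for all such (t,𝔠). -/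
/-- Explicit inverse of the rectifying map `ℛ = (𝒢, ℋ)` for the non-isotrivial
polynomial `ℋ(x,y) = x(xy−1)² + (xy−1)(1−x(xy−1)²)` of type (0,4) in
family 𝔉₁. -/
theorem stmt18 (H G : ℂ → ℂ → ℂ)
    (hH : ∀ x y, H x y = x * (x * y - 1) ^ 2 +
        (x * y - 1) * (1 - x * (x * y - 1) ^ 2))
    (hG : ∀ x y, G x y = x * (x * y - 1) ^ 2)
    (xx yy : ℂ → ℂ → ℂ)
    (hxx : ∀ t 𝔠, xx t 𝔠 = t * (1 - t) ^ 2 / (𝔠 - t) ^ 2)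
    (hyy : ∀ t 𝔠, yy t 𝔠 = (𝔠 + 1 - 2 * t) * (𝔠 - t) ^ 2 / (t * (1 - t) ^ 3)) :
    ∀ t 𝔠 : ℂ, t * (1 - t) * (𝔠 - t) ≠ 0 →
      G (xx t 𝔠) (yy t 𝔠) = t ∧ H (xx t 𝔠) (yy t 𝔠) = 𝔠 := by
  intro t 𝔠 h
  have ht : t ≠ 0 := by intro h'; apply h; rw [h']; ring
  have h1 : (1 : ℂ) - t ≠ 0 := by intro h'; apply h; rw [h']; ring
  have hc : 𝔠 - t ≠ 0 := by intro h'; apply h; rw [h']; ring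
  have hxy : xx t 𝔠 * yy t 𝔠 - 1 = (𝔠 - t) / (1 - t) := by
    rw [hxx, hyy]; field_simp; ring
  constructor
  · rw [hG, hxy, hxx]; field_simp
  · rw [hH, hxy, hxx]; field_simp; ring
end
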